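/- arXiv:1301.6127 — 7 statements merged into one kernel-verified Lean document; each statement's English description precedes it below -/
import Mathlib

section
/- Let S be a finite binary string (a list of elements of {0,1}). If S has a contiguous substring of length i containing exactly j₁ ones and a contiguous substring of length i containing exactly j₂ ones, with j₁ ≤ j₂, then for every j with j₁ ≤ j ≤ j₂, S has a contiguous substring of length i containing exactly j ones. -/
/-! The windows of length `i` starting at positions `k` and `k + 1` both lie inside the window
of length `i + 1` at `k`, which has at most one more one than either of them; so the number of
ones in the window at `k` changes by at most one as `k` increases by one. A function on `ℕ` with
such unit steps cannot skip a value, so between the starting positions of the two given windows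
lies one whose window has exactly `j` ones. -/

namespace Nat

theorem exists_mem_uIcc_eq_of_step_le_one {f : ℕ → ℕ} (hup : ∀ k, f (k + 1) ≤ f k + 1)
    (hdown : ∀ k, f k ≤ f (k + 1) + 1) {a b j : ℕ} (hj : j ∈ Set.uIcc (f a) (f b)) :
    ∃ c ∈ Set.uIcc a b, f c = j := by
  wlog hab : a ≤ b generalizing a b
  · obtain ⟨c, hc, hfc⟩ := this (Set.uIcc_comm (f a) (f b) ▸ hj) (by omega)
    exact ⟨c, Set.uIcc_comm a b ▸ hc, hfc⟩
  induction b, hab using Nat.le_induction with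
  | base => exact ⟨a, Set.left_mem_uIcc, by simpa [eq_comm] using hj⟩
  | succ b hab ih =>
    by_cases hjb : j ∈ Set.uIcc (f a) (f b)
    · obtain ⟨c, hc, hfc⟩ := ih hjb
      exact ⟨c, Set.uIcc_subset_uIcc_left (Set.mem_uIcc_of_le hab (by omega)) hc, hfc⟩
    · refine ⟨b + 1, Set.right_mem_uIcc, ?_⟩
      simp only [Set.mem_uIcc] at hj hjb
      have := hup b
      have := hdown b
      omega

end Nat

namespace List

variable {α : Type*}

theorem take_drop_infix (l : List α) (k i : ℕ) : (l.drop k).take i <:+: l :=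
  (take_prefix i _).isInfix.trans (drop_suffix k l).isInfix

theorem IsInfix.exists_take_drop_eq {t l : List α} (h : t <:+: l) :
    ∃ k, k + t.length ≤ l.length ∧ (l.drop k).take t.length = t := by
  obtain ⟨s, u, rfl⟩ := h
  exact ⟨s.length, by simp, by simp [append_assoc]⟩

variable [BEq α] (a : α)

theorem count_take_succ_le (l : List α) (i : ℕ) :
    (l.take (i + 1)).count a ≤ (l.take i).count a + 1 := by
  have hlast : l[i]?.toList.count a ≤ 1 := count_le_length.trans (by cases l[i]? <;> simp)
  rw [take_add_one, count_append]
  omega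

theorem count_take_succ_le_tail (l : List α) (i : ℕ) :
    (l.take (i + 1)).count a ≤ (l.tail.take i).count a + 1 := by
  cases l with
  | nil => simp
  | cons x l =>
    simp only [take_succ_cons, tail_cons, count_cons]
    split <;> omega

theorem count_take_drop_succ_le (l : List α) (k i : ℕ) :
    ((l.drop (k + 1)).take i).count a ≤ ((l.drop k).take i).count a + 1 := by
  have hsub : (l.drop (k + 1)).take i <+ (l.drop k).take (i + 1) := by
    rw [← tail_drop, ← Nat.add_sub_cancel i 1, ← tail_take_eq_take_tail, Nat.add_sub_cancel]
    exact tail_sublist _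
  exact (hsub.count_le a).trans (count_take_succ_le a _ i)

theorem count_take_drop_le_succ (l : List α) (k i : ℕ) :
    ((l.drop k).take i).count a ≤ ((l.drop (k + 1)).take i).count a + 1 := by
  rw [← tail_drop]
  exact ((take_sublist_take_left (Nat.le_succ i)).count_le a).trans
    (count_take_succ_le_tail a _ i)

end List

theorem string_jumbled_interval_property_general (S : List Bool) (i j₁ j₂ : ℕ)
    (h₁ : ∃ t : List Bool, t <:+: S ∧ t.length = i ∧ t.count true = j₁)
    (h₂ : ∃ t : List Bool, t <:+: S ∧ t.length = i ∧ t.count true = j₂) :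
    ∀ j : ℕ, j₁ ≤ j → j ≤ j₂ →
      ∃ t : List Bool, t <:+: S ∧ t.length = i ∧ t.count true = j := by
  intro j hj₁ hj₂
  obtain ⟨t₁, ht₁, hl₁, rfl⟩ := h₁
  obtain ⟨t₂, ht₂, hl₂, rfl⟩ := h₂
  obtain ⟨k₁, hk₁, hw₁⟩ := ht₁.exists_take_drop_eq
  obtain ⟨k₂, hk₂, hw₂⟩ := ht₂.exists_take_drop_eq
  rw [hl₁] at hk₁ hw₁
  rw [hl₂] at hk₂ hw₂
  rw [← hw₁] at hj₁
  rw [← hw₂] at hj₂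
  obtain ⟨c, hc, hwc⟩ := Nat.exists_mem_uIcc_eq_of_step_le_one
    (f := fun k => ((S.drop k).take i).count true)
    (List.count_take_drop_succ_le true S · _) (List.count_take_drop_le_succ true S · _)
    (Set.mem_uIcc_of_le hj₁ hj₂)
  refine ⟨_, List.take_drop_infix S c _, ?_, hwc⟩
  rw [Set.mem_uIcc] at hc
  simp only [List.length_take, List.length_drop]
  omega

/-- Interval property for binary jumbled pattern matching on strings:
if a binary string `S` has a contiguous substring (infix) of length `i`
with exactly `j₁` ones and one with exactly `j₂` ones, `j₁ ≤ j₂`, then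
for every `j` with `j₁ ≤ j ≤ j₂` it has an infix of length `i` with
exactly `j` ones. -/
theorem string_jumbled_interval_property (S : List Bool) (i j₁ j₂ : ℕ)
    (h₁ : ∃ t : List Bool, t <:+: S ∧ t.length = i ∧ t.count true = j₁)
    (h₂ : ∃ t : List Bool, t <:+: S ∧ t.length = i ∧ t.count true = j₂)
    (hle : j₁ ≤ j₂) :
    ∀ j : ℕ, j₁ ≤ j → j ≤ j₂ →
      ∃ t : List Bool, t <:+: S ∧ t.length = i ∧ t.count true = j :=
  string_jumbled_interval_property_general S i j₁ j₂ h₁ h₂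
end

section
/- Let T be a finite tree and let U₁, U₂ be two vertex subsets of the same size i such that the induced subgraphs T[U₁] and T[U₂] are both connected. Then there exists a finite sequence U₁ = W₀, W₁, …, W_m = U₂ of vertex sets, each of size i and each inducing a connected subgraph of T, such that consecutive sets W_k and W_{k+1} differ by removing one vertex from W_k and adding one vertex, i.e., |W_k ∩ W_{k+1}| = i − 1. -/
/-!
While `U` misses `U₂`, move a vertex `a ∈ U` along a shortest path towards `U₂`: add the next
vertex `w` of that path and drop the vertex of `U` farthest from `w`. Once `U` meets `U₂`, add a
vertex `u ∈ U₂ \ U` adjacent to `U` and drop the vertex of `U \ U₂` farthest from `u`. Each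
exchange keeps the set connected: in a tree the path from a remaining vertex `v` to the added
vertex is unique, so it stays inside `U₂` when `v ∈ U₂`, and otherwise it is a shortest path,
which cannot pass through a vertex at least as far away as `v`.
-/

theorem Relation.ReflTransGen.exists_seq {α : Type*} {r : α → α → Prop} {a b : α}
    (h : Relation.ReflTransGen r a b) :
    ∃ (m : ℕ) (f : ℕ → α), f 0 = a ∧ f m = b ∧ ∀ k < m, r (f k) (f (k + 1)) := by
  induction h using Relation.ReflTransGen.head_induction_on with
  | refl => exact ⟨0, fun _ => b, rfl, rfl, fun _ h => absurd h (Nat.not_lt_zero _)⟩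
  | @head a c hac _ ih =>
    obtain ⟨m, f, hf0, hfm, hf⟩ := ih
    refine ⟨m + 1, fun | 0 => a | k + 1 => f k, rfl, hfm, fun k hk => ?_⟩
    cases k with
    | zero => exact (show r a (f 0) from hf0 ▸ hac)
    | succ k => exact hf k (by omega)

namespace SimpleGraph

variable {V : Type*} {G : SimpleGraph V}

theorem Preconnected.exists_isPath_support_subset {s : Set V} (hs : (G.induce s).Preconnected)
    {a b : V} (ha : a ∈ s) (hb : b ∈ s) :
    ∃ p : G.Walk a b, p.IsPath ∧ ∀ x ∈ p.support, x ∈ s := by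
  obtain ⟨q, hq, -⟩ := (hs ⟨a, ha⟩ ⟨b, hb⟩).exists_path_of_dist
  let f := Embedding.induce (G := G) s
  refine ⟨q.map f.toHom, hq.map f.injective, fun x hx => ?_⟩
  have hx' : x ∈ q.support.map f.toHom := by
    rwa [← Walk.support_map]
  obtain ⟨y, -, rfl⟩ := List.mem_map.1 hx'
  exact y.2

theorem Preconnected.exists_adj_of_mem_of_notMem {s t : Set V} (hs : (G.induce s).Preconnected)
    {x y : V} (hx : x ∈ s ∩ t) (hy : y ∈ s \ t) :
    ∃ a u, a ∈ s ∩ t ∧ u ∈ s \ t ∧ G.Adj a u := by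
  obtain ⟨p⟩ := hs ⟨x, hx.1⟩ ⟨y, hy.1⟩
  obtain ⟨d, -, hd₁, hd₂⟩ := p.exists_boundary_dart {v | v.1 ∈ t} hx.2 hy.2
  exact ⟨d.fst, d.snd, ⟨d.fst.2, hd₁⟩, ⟨d.snd.2, hd₂⟩, d.adj⟩

theorem Connected.induce_insert {s : Set V} (hs : (G.induce s).Connected) {a u : V} (ha : a ∈ s)
    (hau : G.Adj a u) : (G.induce (insert u s)).Connected := by
  rw [← Set.union_singleton]
  exact connected_induce_union hs.preconnected Preconnected.of_subsingleton ha rfl hau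

theorem Reachable.exists_adj_dist_lt {a b : V} (h : G.Reachable a b) (hne : a ≠ b) :
    ∃ w, G.Adj a w ∧ G.dist w b < G.dist a b := by
  obtain ⟨p, hp⟩ := h.exists_walk_length_eq_dist
  cases p with
  | nil => exact absurd rfl hne
  | cons hadj q =>
    refine ⟨_, hadj, ?_⟩
    have := dist_le q
    simp only [Walk.length_cons] at hp
    omega

namespace IsAcyclic

theorem eq_of_isPath (hG : G.IsAcyclic) {a b : V} {p q : G.Walk a b} (hp : p.IsPath)
    (hq : q.IsPath) : p = q :=
  congrArg Subtype.val ((hG.subsingleton_path a b).elim ⟨p, hp⟩ ⟨q, hq⟩)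

theorem length_eq_dist (hG : G.IsAcyclic) {a b : V} {p : G.Walk a b} (hp : p.IsPath) :
    p.length = G.dist a b := by
  obtain ⟨q, hq, hlen⟩ := Reachable.exists_path_of_dist ⟨p⟩
  rw [← hlen, hG.eq_of_isPath hp hq]

theorem dist_lt_of_mem_support (hG : G.IsAcyclic) {a b c : V} {p : G.Walk a b} (hp : p.IsPath)
    (hc : c ∈ p.support) (hcb : c ≠ b) : G.dist a c < G.dist a b := by
  classical
  have hsplit := congrArg Walk.length (p.take_spec hc)
  have hdrop : (p.dropUntil c hc).length ≠ 0 := fun h => hcb (Walk.eq_of_length_eq_zero h)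
  rw [Walk.length_append] at hsplit
  rw [← hG.length_eq_dist hp, ← hG.length_eq_dist (hp.takeUntil hc)]
  omega

theorem support_subset_of_isPath (hG : G.IsAcyclic) {s : Set V} (hs : (G.induce s).Preconnected)
    {a b : V} (ha : a ∈ s) (hb : b ∈ s) {p : G.Walk a b} (hp : p.IsPath) :
    ∀ x ∈ p.support, x ∈ s := by
  obtain ⟨q, hq, hqs⟩ := hs.exists_isPath_support_subset ha hb
  rwa [hG.eq_of_isPath hp hq]

theorem connected_induce_diff_singleton_of_farthest (hG : G.IsAcyclic) {W K : Set V}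
    (hW : (G.induce W).Connected) (hK : (G.induce K).Preconnected) {u ℓ : V} (huW : u ∈ W)
    (huK : u ∈ K) (hℓK : ℓ ∉ K) (hfar : ∀ y ∈ W, y ∉ K → G.dist u y ≤ G.dist u ℓ) :
    (G.induce (W \ {ℓ})).Connected := by
  have huℓ : u ≠ ℓ := fun h => hℓK (h ▸ huK)
  refine induce_connected_of_patches u ⟨huW, huℓ⟩ fun {v} hv => ?_
  obtain ⟨p, hp, hpW⟩ := hW.preconnected.exists_isPath_support_subset huW hv.1
  have hℓp : ℓ ∉ p.support := by
    intro hℓp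
    by_cases hvK : v ∈ K
    · exact hℓK (hG.support_subset_of_isPath hK huK hvK hp ℓ hℓp)
    · have := hG.dist_lt_of_mem_support hp hℓp (Ne.symm hv.2)
      have := hfar v hv.1 hvK
      omega
  refine ⟨{x | x ∈ p.support}, fun x hx => ⟨hpW x hx, fun h => hℓp (h ▸ hx)⟩,
    p.start_mem_support, p.end_mem_support, p.connected_induce_support.preconnected _ _⟩

end IsAcyclic

section Swap

variable [DecidableEq V] {i : ℕ}

open Finset

def ConnectedSwap (G : SimpleGraph V) (i : ℕ) (U U' : Finset V) : Prop :=
  U'.card = i ∧ (G.induce (U' : Set V)).Connected ∧ (U ∩ U').card = i - 1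

theorem connectedSwap_erase_insert {U : Finset V} {u ℓ : V} (hU : U.card = i) (hu : u ∉ U)
    (hℓ : ℓ ∈ U) (hc : (G.induce ((insert u U).erase ℓ : Set V)).Connected) :
    ConnectedSwap G i U ((insert u U).erase ℓ) := by
  refine ⟨?_, hc, ?_⟩
  · rw [card_erase_of_mem (mem_insert_of_mem hℓ), card_insert_of_notMem hu, hU, Nat.add_sub_cancel]
  · have : U ∩ (insert u U).erase ℓ = U.erase ℓ := by
      ext y
      simp only [mem_inter, mem_erase, mem_insert]
      tauto
    rw [this, card_erase_of_mem hℓ, hU]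

theorem IsAcyclic.reflTransGen_connectedSwap_of_inter_nonempty (hG : G.IsAcyclic)
    {U U₂ : Finset V} (hU : U.card = i) (hcU : (G.induce (U : Set V)).Connected)
    (h₂ : U₂.card = i) (hc₂ : (G.induce (U₂ : Set V)).Connected) (hint : (U ∩ U₂).Nonempty) :
    Relation.ReflTransGen (ConnectedSwap G i) U U₂ := by
  induction hn : (U₂ \ U).card using Nat.strong_induction_on generalizing U with
  | _ n ih =>
  by_cases hUU₂ : U = U₂
  · rw [hUU₂]
  obtain ⟨x, hx⟩ := hint
  obtain ⟨y, hy⟩ : (U₂ \ U).Nonempty := sdiff_nonempty.2 fun h =>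
    hUU₂ (eq_of_subset_of_card_le h (by omega)).symm
  have hdiff₁ : (U \ U₂).Nonempty := sdiff_nonempty.2 fun h =>
    hUU₂ (eq_of_subset_of_card_le h (by omega))
  obtain ⟨a, u, ha, hu, hau⟩ := hc₂.preconnected.exists_adj_of_mem_of_notMem (t := U)
    ⟨(mem_inter.1 hx).2, (mem_inter.1 hx).1⟩ (mem_sdiff.1 hy)
  obtain ⟨ℓ, hℓ, hfar⟩ := (U \ U₂).exists_max_image (G.dist u) hdiff₁
  have hℓ' := mem_sdiff.1 hℓ
  have hc' : (G.induce ((insert u U).erase ℓ : Set V)).Connected := by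
    rw [coe_erase, coe_insert]
    refine hG.connected_induce_diff_singleton_of_farthest (hcU.induce_insert ha.2 hau)
      hc₂.preconnected (Set.mem_insert _ _) hu.1 hℓ'.2 fun y hy hyK => hfar y ?_
    exact mem_sdiff.2 ⟨(Set.mem_insert_iff.1 hy).resolve_left (fun h => hyK (h ▸ hu.1)), hyK⟩
  have hstep := connectedSwap_erase_insert hU hu.2 hℓ'.1 hc'
  refine .head hstep (ih _ ?_ hstep.1 hstep.2.1 ⟨u, ?_⟩ rfl)
  · have hshrink : U₂ \ (insert u U).erase ℓ = (U₂ \ U).erase u := by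
      ext z
      simp only [mem_sdiff, mem_erase, mem_insert]
      grind
    have := card_pos.2 ⟨y, hy⟩
    rw [hshrink, card_erase_of_mem (mem_sdiff.2 hu)]
    omega
  · simp only [mem_inter, mem_erase, mem_insert, true_or, and_true]
    exact ⟨fun h => hℓ'.2 (h ▸ hu.1), hu.1⟩

theorem IsAcyclic.reflTransGen_connectedSwap (hconn : G.Connected) (hG : G.IsAcyclic)
    {U U₂ : Finset V} (hU : U.card = i) (hcU : (G.induce (U : Set V)).Connected)
    (h₂ : U₂.card = i) (hc₂ : (G.induce (U₂ : Set V)).Connected) :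
    Relation.ReflTransGen (ConnectedSwap G i) U U₂ := by
  obtain ⟨⟨a, ha⟩⟩ := hcU.nonempty
  obtain ⟨⟨b, hb⟩⟩ := hc₂.nonempty
  induction hn : G.dist a b using Nat.strong_induction_on generalizing U a with
  | _ n ih =>
  by_cases ha₂ : a ∈ U₂
  · exact hG.reflTransGen_connectedSwap_of_inter_nonempty hU hcU h₂ hc₂
      ⟨a, mem_inter.2 ⟨ha, ha₂⟩⟩
  obtain ⟨w, haw, hw⟩ := (hconn a b).exists_adj_dist_lt fun h => ha₂ (h ▸ hb)
  by_cases hwU : w ∈ U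
  · exact ih _ (hn ▸ hw) hU hcU w hwU rfl
  obtain ⟨ℓ, hℓ, hfar⟩ := U.exists_max_image (G.dist w) ⟨a, ha⟩
  have hℓw : ℓ ≠ w := fun h => hwU (h ▸ hℓ)
  have hc' : (G.induce ((insert w U).erase ℓ : Set V)).Connected := by
    rw [coe_erase, coe_insert]
    exact hG.connected_induce_diff_singleton_of_farthest (K := {w}) (hcU.induce_insert ha haw)
      Preconnected.of_subsingleton (Set.mem_insert _ _) rfl hℓw
      fun y hy hyw => hfar y ((Set.mem_insert_iff.1 hy).resolve_left hyw)
  have hstep := connectedSwap_erase_insert hU hwU hℓ hc'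
  have hwU' : w ∈ (insert w U).erase ℓ := mem_erase.2 ⟨hℓw.symm, mem_insert_self _ _⟩
  exact .head hstep (ih _ (hn ▸ hw) hstep.1 hstep.2.1 w hwU' rfl)

end Swap

end SimpleGraph

theorem tree_subtree_morph_general {V : Type*} [DecidableEq V]
    (G : SimpleGraph V) (hconn : G.Connected) (hacyc : G.IsAcyclic)
    (i : ℕ) (U₁ U₂ : Finset V)
    (h₁ : U₁.card = i) (h₂ : U₂.card = i)
    (hc₁ : (G.induce (↑U₁ : Set V)).Connected)
    (hc₂ : (G.induce (↑U₂ : Set V)).Connected) :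
    ∃ (m : ℕ) (W : ℕ → Finset V),
      W 0 = U₁ ∧ W m = U₂ ∧
      (∀ k ≤ m, (W k).card = i ∧ (G.induce (↑(W k) : Set V)).Connected) ∧
      (∀ k < m, (W k ∩ W (k + 1)).card = i - 1) := by
  obtain ⟨m, W, hW0, hWm, hstep⟩ :=
    (hacyc.reflTransGen_connectedSwap hconn h₁ hc₁ h₂ hc₂).exists_seq
  refine ⟨m, W, hW0, hWm, fun k hk => ?_, fun k hk => (hstep k hk).2.2⟩
  cases k with
  | zero => exact hW0 ▸ ⟨h₁, hc₁⟩
  | succ k => exact ⟨(hstep k hk).1, (hstep k hk).2.1⟩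

/-- Any connected `i`-vertex subgraph of a tree can be morphed into any other
by a sequence of connected `i`-vertex subgraphs, each obtained from the
previous one by removing one vertex and adding another
(so consecutive sets intersect in `i - 1` vertices). -/
theorem tree_subtree_morph {V : Type*} [Fintype V] [DecidableEq V]
    (G : SimpleGraph V) (hconn : G.Connected) (hacyc : G.IsAcyclic)
    (i : ℕ) (U₁ U₂ : Finset V)
    (h₁ : U₁.card = i) (h₂ : U₂.card = i)
    (hc₁ : (G.induce (↑U₁ : Set V)).Connected)
    (hc₂ : (G.induce (↑U₂ : Set V)).Connected) :
    ∃ (m : ℕ) (W : ℕ → Finset V),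
      W 0 = U₁ ∧ W m = U₂ ∧
      (∀ k ≤ m, (W k).card = i ∧ (G.induce (↑(W k) : Set V)).Connected) ∧
      (∀ k < m, (W k ∩ W (k + 1)).card = i - 1) :=
  tree_subtree_morph_general G hconn hacyc i U₁ U₂ h₁ h₂ hc₁ hc₂
end

section
/- Define cost over finite rooted binary trees by: cost(leaf) = 0, and for a tree with root r whose two subtrees have sizes x and y, cost = x·y + cost(left subtree) + cost(right subtree); for a root with one child, cost = cost(child). Then for any such tree T with n vertices, cost(T) ≤ n². -/
/-- A finite rooted binary tree: a leaf, a node with one child, or a node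
with two children. -/
inductive BTree where
  | leaf : BTree
  | node1 (c : BTree) : BTree
  | node2 (l r : BTree) : BTree

/-- Number of vertices. -/
def BTree.size : BTree → ℕ
  | .leaf => 1
  | .node1 c => 1 + c.size
  | .node2 l r => 1 + l.size + r.size

/-- Merge cost: a two-child node with subtree sizes `x` and `y` contributes
`x * y`; a one-child node contributes nothing beyond its child. -/
def BTree.cost : BTree → ℕ
  | .leaf => 0
  | .node1 c => c.cost
  | .node2 l r => l.size * r.size + l.cost + r.cost

theorem mul_add_sq_add_sq_le_one_add_add_sq (x y : ℕ) :
    x * y + x ^ 2 + y ^ 2 ≤ (1 + x + y) ^ 2 := by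
  nlinarith

/-- Lemma 3 of the paper: the total merge cost of a rooted binary tree with
`n` vertices is at most `n²`. -/
theorem btree_cost_le_sq (t : BTree) : t.cost ≤ t.size ^ 2 := by
  induction t with
  | leaf => simp [BTree.cost]
  | node1 c ih =>
    calc c.cost ≤ c.size ^ 2 := ih
      _ ≤ (1 + c.size) ^ 2 := by gcongr; omega
  | node2 l r ihl ihr =>
    calc l.size * r.size + l.cost + r.cost ≤ l.size * r.size + l.size ^ 2 + r.size ^ 2 := by
          gcongr
      _ ≤ (1 + l.size + r.size) ^ 2 := mul_add_sq_add_sq_le_one_add_add_sq _ _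
end

section
/- Define cap-cost over finite rooted binary trees with parameter i ≥ 1 by: for a node with two children whose subtrees have sizes a and b, the node contributes min(a, i)·min(b, i), and the total cap-cost is the sum of contributions over all two-child nodes. Then for any rooted binary tree with n vertices, the total cap-cost is at most C·n·i for some absolute constant C (e.g., cap-cost ≤ 3·n·i). -/
/-- Cap-cost with parameter `i`: every two-child node with subtree sizes
`a` and `b` contributes `min a i * min b i`. -/
def BTree.capCost (i : ℕ) : BTree → ℕ
  | .leaf => 0
  | .node1 c => c.capCost i
  | .node2 l r => min l.size i * min r.size i + l.capCost i + r.capCost i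

/-!
Amortization with the potential `φ(s) = 2·i·m - m² = i² - (i - m)²`, where `m = min s i`, of a
subtree of size `s`. It is nonnegative, adding one vertex raises it by at most `2i`, and at a
two-child node with subtree sizes `a`, `b` the merge cost is paid for by the children's potentials:
`min a i · min b i + φ(1 + a + b) ≤ 3i + φ(a) + φ(b)`. Induction then gives
`capCost t + φ(size t) ≤ 3·i·size t`.
-/

namespace BTree

def capPotential (i s : ℕ) : ℤ := 2 * i * min s i - min s i ^ 2

variable (i : ℕ)

lemma capPotential_nonneg (s : ℕ) : 0 ≤ capPotential i s := by
  have hm : ((min s i : ℕ) : ℤ) ≤ i := by exact_mod_cast min_le_right s i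
  unfold capPotential
  nlinarith [Int.natCast_nonneg (min s i)]

lemma capPotential_one_add_le (s : ℕ) : capPotential i (1 + s) ≤ capPotential i s + 2 * i := by
  have hle : ((min s i : ℕ) : ℤ) ≤ (min (1 + s) i : ℕ) := by omega
  have hsucc : ((min (1 + s) i : ℕ) : ℤ) ≤ (min s i : ℕ) + 1 := by omega
  have hcap : ((min (1 + s) i : ℕ) : ℤ) ≤ i := by exact_mod_cast min_le_right _ i
  unfold capPotential
  nlinarith

lemma min_mul_min_add_capPotential_le (a b : ℕ) :
    ((min a i : ℕ) : ℤ) * (min b i : ℕ) + capPotential i (1 + a + b) ≤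
      3 * i + capPotential i a + capPotential i b := by
  unfold capPotential
  rcases le_total (1 + a + b) i with h | h
  · rw [min_eq_left h, min_eq_left (by omega : a ≤ i), min_eq_left (by omega : b ≤ i)]
    push_cast
    nlinarith
  · have hx : ((min a i : ℕ) : ℤ) ≤ i := by exact_mod_cast min_le_right a i
    have hy : ((min b i : ℕ) : ℤ) ≤ i := by exact_mod_cast min_le_right b i
    have hxy : (i : ℤ) ≤ (min a i : ℕ) + (min b i : ℕ) + 1 := by omega
    rw [min_eq_right h]
    nlinarith [mul_nonneg (sub_nonneg.2 hx) (sub_nonneg.2 hy)]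

theorem capCost_add_capPotential_le (t : BTree) :
    t.capCost i + capPotential i t.size ≤ 3 * i * t.size := by
  induction t with
  | leaf =>
    simp only [capCost, size, Nat.cast_zero, Nat.cast_one, zero_add, mul_one]
    have hzero : capPotential i 0 = 0 := by simp [capPotential]
    linarith [capPotential_one_add_le i 0]
  | node1 c ih =>
    simp only [capCost, size]
    push_cast
    linarith [capPotential_one_add_le i c.size]
  | node2 l r ihl ihr =>
    simp only [capCost, size, Nat.cast_add, Nat.cast_mul, Nat.cast_one]
    linarith [min_mul_min_add_capPotential_le i l.size r.size]

end BTree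

theorem btree_capCost_le_general (i : ℕ) (t : BTree) :
    t.capCost i ≤ 3 * t.size * i := by
  have hcost := t.capCost_add_capPotential_le i
  have hpot := BTree.capPotential_nonneg i t.size
  zify
  linarith

/-- Lemma 4's running-time analysis: the total cap-cost of a rooted binary
tree with `n` vertices is at most `3 * n * i`. -/
theorem btree_capCost_le (i : ℕ) (hi : 1 ≤ i) (t : BTree) :
    t.capCost i ≤ 3 * t.size * i :=
  btree_capCost_le_general i t
end

section
/- Let T be a rooted binary tree with n vertices and let i ≥ 1. The number of vertices v such that v has two children u, w with both |T_u| > i and |T_w| > i is at most n/i (i.e., at most ⌊n/i⌋). -/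
/-! Call a vertex heavy if its subtree has more than `i` vertices, and write `S` for the vertices
with at least two heavy children. By induction on subtrees, every heavy `t` satisfies
`(#(S ∩ T_t) + 1) * (i + 1) ≤ #T_t`: the vertices of `S` below `t` lie below heavy children of
`t`, the subtrees of the children are disjoint and miss `t`, and if `t ∈ S` it has at least two
heavy children to pay for itself. At the root this gives `#S * (i + 1) ≤ n`. -/

open Finset

structure IsRootedTree {V : Type*} (parent : V → V) (root : V) : Prop where
  parent_root : parent root = root
  exists_iterate_eq_root : ∀ v, ∃ k, parent^[k] v = root

theorem IsRootedTree.eq_root_of_isPeriodicPt {V : Type*} {parent : V → V} {root : V}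
    (hT : IsRootedTree parent root) {v : V} {m : ℕ} (hm : m ≠ 0)
    (hv : Function.IsPeriodicPt parent m v) : v = root := by
  obtain ⟨k, hk⟩ := hT.exists_iterate_eq_root v
  have hle : k ≤ m * k := Nat.le_mul_of_pos_left k (Nat.pos_of_ne_zero hm)
  calc v = parent^[m * k] v := (hv.mul_const k).eq.symm
    _ = parent^[m * k - k] (parent^[k] v) := by
      rw [← Function.iterate_add_apply, Nat.sub_add_cancel hle]
    _ = root := by rw [hk, Function.iterate_fixed hT.parent_root]

section Subtree

open scoped Classical

variable {V : Type*} [Fintype V] (parent : V → V)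

noncomputable def subtree (v : V) : Finset V := {u | ∃ k, parent^[k] u = v}

noncomputable def children (v : V) : Finset V := {u | parent u = v ∧ u ≠ v}

noncomputable def heavyChildren (i : ℕ) (v : V) : Finset V :=
  {c ∈ children parent v | i < #(subtree parent c)}

noncomputable def bigBranchingNodes (i : ℕ) : Finset V := {v | 2 ≤ #(heavyChildren parent i v)}

variable {parent} {root t u v : V} {i : ℕ}

theorem mem_subtree : u ∈ subtree parent v ↔ ∃ k, parent^[k] u = v := by simp [subtree]

theorem coe_subtree : (subtree parent v : Set V) = {u | ∃ k, parent^[k] u = v} := by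
  ext; simp [mem_subtree]

theorem mem_subtree_self (v : V) : v ∈ subtree parent v := mem_subtree.2 ⟨0, rfl⟩

theorem mem_children : u ∈ children parent v ↔ parent u = v ∧ u ≠ v := by simp [children]

theorem mem_heavyChildren :
    u ∈ heavyChildren parent i v ↔ u ∈ children parent v ∧ i < #(subtree parent u) := by
  simp [heavyChildren]

theorem mem_subtree_of_mem_children (h : u ∈ children parent v) : u ∈ subtree parent v :=
  mem_subtree.2 ⟨1, (mem_children.1 h).1⟩

theorem subtree_subset_of_mem (h : u ∈ subtree parent v) :
    subtree parent u ⊆ subtree parent v := by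
  obtain ⟨a, ha⟩ := mem_subtree.1 h
  intro x hx
  obtain ⟨b, hb⟩ := mem_subtree.1 hx
  exact mem_subtree.2 ⟨a + b, by rw [Function.iterate_add_apply, hb, ha]⟩

theorem parent_mem_subtree_of_mem_of_ne (h : u ∈ subtree parent v) (hne : u ≠ v) :
    parent u ∈ subtree parent v := by
  obtain ⟨_ | k, hk⟩ := mem_subtree.1 h
  · exact absurd hk hne
  · exact mem_subtree.2 ⟨k, by rwa [← Function.iterate_succ_apply]⟩

theorem mem_subtree_or_mem_subtree {x : V} (hu : x ∈ subtree parent u)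
    (hv : x ∈ subtree parent v) : u ∈ subtree parent v ∨ v ∈ subtree parent u := by
  obtain ⟨a, rfl⟩ := mem_subtree.1 hu
  obtain ⟨b, rfl⟩ := mem_subtree.1 hv
  rcases le_total a b with hab | hab
  · refine .inl <| mem_subtree.2 ⟨b - a, ?_⟩
    rw [← Function.iterate_add_apply, Nat.sub_add_cancel hab]
  · refine .inr <| mem_subtree.2 ⟨a - b, ?_⟩
    rw [← Function.iterate_add_apply, Nat.sub_add_cancel hab]

theorem exists_mem_children_mem_subtree (h : v ∈ subtree parent t) (hne : v ≠ t) :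
    ∃ c ∈ children parent t, v ∈ subtree parent c := by
  have hex : ∃ k, parent^[k] v = t := mem_subtree.1 h
  obtain ⟨k, hk⟩ : ∃ k, Nat.find hex = k + 1 :=
    Nat.exists_eq_succ_of_ne_zero fun h0 => hne (by simpa [h0] using Nat.find_spec hex)
  refine ⟨parent^[k] v, mem_children.2 ⟨?_, fun hkt => ?_⟩, mem_subtree.2 ⟨k, rfl⟩⟩
  · rw [← Function.iterate_succ_apply' parent k v, Nat.succ_eq_add_one, ← hk]
    exact Nat.find_spec hex
  · exact Nat.find_min hex (hk ▸ k.lt_succ_self) hkt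

theorem subtree_eq_insert_biUnion_children (t : V) :
    subtree parent t = insert t ((children parent t).biUnion (subtree parent)) := by
  ext v
  simp only [mem_insert, mem_biUnion]
  constructor
  · intro hv
    by_cases hvt : v = t
    · exact .inl hvt
    · exact .inr (exists_mem_children_mem_subtree hv hvt)
  · rintro (rfl | ⟨c, hc, hv⟩)
    · exact mem_subtree_self v
    · exact subtree_subset_of_mem (mem_subtree_of_mem_children hc) hv

theorem IsRootedTree.notMem_subtree_of_mem_children (hT : IsRootedTree parent root)
    {c : V} (hc : c ∈ children parent t) : t ∉ subtree parent c := by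
  obtain ⟨hpc, hne⟩ := mem_children.1 hc
  intro ht
  obtain ⟨a, ha⟩ := mem_subtree.1 ht
  have hcr : c = root := hT.eq_root_of_isPeriodicPt a.succ_ne_zero <| by
    rw [Function.IsPeriodicPt, Function.IsFixedPt, Function.iterate_succ_apply, hpc, ha]
  exact hne (by rw [← hpc, hcr, hT.parent_root])

theorem IsRootedTree.disjoint_subtree_of_mem_children (hT : IsRootedTree parent root)
    {c d : V} (hc : c ∈ children parent t) (hd : d ∈ children parent t) (hne : c ≠ d) :
    Disjoint (subtree parent c) (subtree parent d) := by
  have notMem {c d : V} (hc : c ∈ children parent t) (hd : d ∈ children parent t)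
      (hne : c ≠ d) : c ∉ subtree parent d := fun hcd => by
    have := parent_mem_subtree_of_mem_of_ne hcd hne
    rw [(mem_children.1 hc).1] at this
    exact hT.notMem_subtree_of_mem_children hd this
  refine disjoint_left.2 fun x hxc hxd => ?_
  rcases mem_subtree_or_mem_subtree hxc hxd with h | h
  · exact notMem hc hd hne h
  · exact notMem hd hc hne.symm h

theorem IsRootedTree.card_subtree (hT : IsRootedTree parent root) (t : V) :
    #(subtree parent t) = ∑ c ∈ children parent t, #(subtree parent c) + 1 := by
  rw [subtree_eq_insert_biUnion_children t, card_insert_of_notMem, card_biUnion]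
  · exact fun c hc d hd hne => hT.disjoint_subtree_of_mem_children hc hd hne
  · simp only [mem_biUnion, not_exists, not_and]
    exact fun c hc => hT.notMem_subtree_of_mem_children hc

theorem IsRootedTree.subtree_root (hT : IsRootedTree parent root) :
    subtree parent root = univ :=
  eq_univ_of_forall fun v => mem_subtree.2 (hT.exists_iterate_eq_root v)

theorem mem_bigBranchingNodes_iff_two_le :
    v ∈ bigBranchingNodes parent i ↔ 2 ≤ #(heavyChildren parent i v) := by
  simp [bigBranchingNodes]

theorem mem_bigBranchingNodes : v ∈ bigBranchingNodes parent i ↔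
    ∃ u w : V, u ≠ w ∧ u ≠ v ∧ w ≠ v ∧ parent u = v ∧ parent w = v ∧
      i < #(subtree parent u) ∧ i < #(subtree parent w) := by
  refine (mem_bigBranchingNodes_iff_two_le.trans one_lt_card).trans ?_
  simp only [mem_heavyChildren, mem_children]
  constructor
  · rintro ⟨u, ⟨⟨hpu, hu⟩, hiu⟩, w, ⟨⟨hpw, hw⟩, hiw⟩, huw⟩
    exact ⟨u, w, huw, hu, hw, hpu, hpw, hiu, hiw⟩
  · rintro ⟨u, w, huw, hu, hw, hpu, hpw, hiu, hiw⟩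
    exact ⟨u, ⟨⟨hpu, hu⟩, hiu⟩, w, ⟨⟨hpw, hw⟩, hiw⟩, huw⟩

theorem lt_card_subtree_of_mem_bigBranchingNodes (hv : v ∈ bigBranchingNodes parent i) :
    i < #(subtree parent v) := by
  have hH : (heavyChildren parent i v).Nonempty := by
    rw [← card_pos]
    exact two_pos.trans_le (mem_bigBranchingNodes_iff_two_le.1 hv)
  obtain ⟨c, hc⟩ := hH
  obtain ⟨hcv, hci⟩ := mem_heavyChildren.1 hc
  exact hci.trans_le (card_le_card (subtree_subset_of_mem (mem_subtree_of_mem_children hcv)))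

theorem bigBranchingNodes_inter_subtree_subset (t : V) :
    bigBranchingNodes parent i ∩ subtree parent t ⊆ bigBranchingNodes parent i ∩ {t} ∪
      (heavyChildren parent i t).biUnion
        fun c => bigBranchingNodes parent i ∩ subtree parent c := by
  intro v hv
  obtain ⟨hvS, hvt⟩ := mem_inter.1 hv
  by_cases hne : v = t
  · exact mem_union_left _ (mem_inter.2 ⟨hvS, mem_singleton.2 hne⟩)
  obtain ⟨c, hc, hvc⟩ := exists_mem_children_mem_subtree hvt hne
  have hci : i < #(subtree parent c) :=
    (lt_card_subtree_of_mem_bigBranchingNodes hvS).trans_le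
      (card_le_card (subtree_subset_of_mem hvc))
  exact mem_union_right _
    (mem_biUnion.2 ⟨c, mem_heavyChildren.2 ⟨hc, hci⟩, mem_inter.2 ⟨hvS, hvc⟩⟩)

theorem IsRootedTree.card_bigBranchingNodes_inter_subtree_add_one_mul_le
    (hT : IsRootedTree parent root) (ht : i < #(subtree parent t)) :
    (#(bigBranchingNodes parent i ∩ subtree parent t) + 1) * (i + 1) ≤ #(subtree parent t) := by
  induction hn : #(subtree parent t) using Nat.strong_induction_on generalizing t with
  | _ n ih =>
  set S := bigBranchingNodes parent i
  set H := heavyChildren parent i t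
  have hsum : ∑ c ∈ H, #(subtree parent c) < n := by
    rw [← hn, hT.card_subtree t, Nat.lt_succ_iff]
    exact sum_le_sum_of_subset (filter_subset _ _)
  have hIH : ∀ c ∈ H, (#(S ∩ subtree parent c) + 1) * (i + 1) ≤ #(subtree parent c) :=
    fun c hc => ih _ ((single_le_sum (fun _ _ => Nat.zero_le _) hc).trans_lt hsum)
      (mem_heavyChildren.1 hc).2 rfl
  have hcount :
      #(S ∩ subtree parent t) ≤ #(S ∩ {t}) + ∑ c ∈ H, #(S ∩ subtree parent c) :=
    (card_le_card (bigBranchingNodes_inter_subtree_subset t)).trans <|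
      (card_union_le _ _).trans (Nat.add_le_add_left card_biUnion_le _)
  rcases H.eq_empty_or_nonempty with hH | hH
  · have htS : t ∉ S := fun htS => by
      have h2 : 2 ≤ #H := mem_bigBranchingNodes_iff_two_le.1 htS
      simp [hH] at h2
    rw [inter_singleton_of_notMem htS, hH, card_empty, sum_empty, add_zero, Nat.le_zero] at hcount
    rw [hcount, zero_add, one_mul, ← hn]
    exact ht
  · have hroom : #(S ∩ {t}) + 1 ≤ #H := by
      by_cases htS : t ∈ S
      · rw [inter_singleton_of_mem htS, card_singleton]
        exact mem_bigBranchingNodes_iff_two_le.1 htS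
      · rw [inter_singleton_of_notMem htS, card_empty]
        exact card_pos.2 hH
    calc (#(S ∩ subtree parent t) + 1) * (i + 1)
        ≤ (∑ c ∈ H, #(S ∩ subtree parent c) + #H) * (i + 1) :=
          Nat.mul_le_mul_right _ (by omega)
      _ = ∑ c ∈ H, (#(S ∩ subtree parent c) + 1) * (i + 1) := by
        rw [← sum_mul, sum_add_distrib, sum_const, smul_eq_mul, mul_one]
      _ ≤ ∑ c ∈ H, #(subtree parent c) := sum_le_sum hIH
      _ ≤ n := hsum.le

theorem IsRootedTree.card_bigBranchingNodes_mul_le (hT : IsRootedTree parent root) (i : ℕ) :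
    #(bigBranchingNodes parent i) * (i + 1) ≤ Fintype.card V := by
  obtain hS | ⟨v, hv⟩ := (bigBranchingNodes parent i).eq_empty_or_nonempty
  · simp [hS]
  have hroot : i < #(subtree parent root) := by
    rw [hT.subtree_root]
    exact (lt_card_subtree_of_mem_bigBranchingNodes hv).trans_le (card_le_univ _)
  have := hT.card_bigBranchingNodes_inter_subtree_add_one_mul_le hroot
  rw [hT.subtree_root, inter_univ, card_univ] at this
  exact (Nat.mul_le_mul_right _ (Nat.le_succ _)).trans this

end Subtree

theorem big_branching_nodes_few_general {V : Type*} [Fintype V]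
    (parent : V → V) (root : V)
    (hroot : parent root = root)
    (hreach : ∀ v : V, ∃ k : ℕ, parent^[k] v = root)
    (i : ℕ) (hi : 1 ≤ i)
    (sub : V → Set V) (hsub : ∀ v, sub v = {u : V | ∃ k : ℕ, parent^[k] u = v}) :
    {v : V | ∃ u w : V, u ≠ w ∧ u ≠ v ∧ w ≠ v ∧ parent u = v ∧ parent w = v ∧
      i < (sub u).ncard ∧ i < (sub w).ncard}.ncard ≤ Fintype.card V / i := by
  have hsub' : sub = fun v => (subtree parent v : Set V) :=
    funext fun v => (hsub v).trans coe_subtree.symm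
  have hS : {v : V | ∃ u w : V, u ≠ w ∧ u ≠ v ∧ w ≠ v ∧ parent u = v ∧ parent w = v ∧
      i < (sub u).ncard ∧ i < (sub w).ncard} = bigBranchingNodes parent i := by
    ext v
    simp [hsub', mem_bigBranchingNodes]
  rw [hS, Set.ncard_coe_finset, Nat.le_div_iff_mul_le hi]
  exact (Nat.mul_le_mul_left _ (Nat.le_succ i)).trans
    (IsRootedTree.card_bigBranchingNodes_mul_le ⟨hroot, hreach⟩ i)

/-- In a rooted binary tree on `n` vertices given by a parent function, the
number of vertices having two children whose subtrees both have size
greater than `i` is at most `n / i`. -/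
theorem big_branching_nodes_few {V : Type*} [Fintype V] [DecidableEq V]
    (parent : V → V) (root : V)
    (hroot : parent root = root)
    (hreach : ∀ v : V, ∃ k : ℕ, parent^[k] v = root)
    (hbin : ∀ v : V, {u : V | parent u = v ∧ u ≠ v}.ncard ≤ 2)
    (i : ℕ) (hi : 1 ≤ i)
    (sub : V → Set V) (hsub : ∀ v, sub v = {u : V | ∃ k : ℕ, parent^[k] u = v}) :
    {v : V | ∃ u w : V, u ≠ w ∧ u ≠ v ∧ w ≠ v ∧ parent u = v ∧ parent w = v ∧
      i < (sub u).ncard ∧ i < (sub w).ncard}.ncard ≤ Fintype.card V / i :=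
  big_branching_nodes_few_general parent root hroot hreach i hi sub hsub
end

section
/- Let T be a finite tree with max degree at most 3 and let x ≥ 1. Then the vertices of T can be partitioned into connected subsets (micro trees) C₁, …, C_m such that each |C_k| ≤ x, m = O(n/x) (e.g., m ≤ 4n/x + 1), and for each k at most two vertices of C_k are adjacent to vertices outside C_k. -/
/-!
Root the tree at a vertex `r` of degree at most two and recurse on *rooted clusters*: connected
sets `S` that meet the rest of the tree only at `r`. A pendant subtree `D` of `S`, cut off from
`S` by a single edge `d - w` on the side away from `r`, is again a rooted cluster, with root `d`.

With `t = ⌈x / 4⌉`, take `D` of maximal size among the pendant subtrees leaving at least `t`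
vertices in `R = S \ D`. If `|R| ≤ x`, then `R` is a micro tree with boundary in `{r, w}`, paid for
by its `t` vertices, and we recurse on `D`. Otherwise maximality of `D` forces the component of
`r` in `R - w` to have fewer than `t` vertices; with `w` it forms a small micro tree `Q`, and the
rest `O` of `R` is a pendant subtree no larger than `D`, on which we recurse as well. The possibly
tiny `Q` is paid for by `D` and `O`. This needs `D` to be large: the smallest pendant subtree with
at least `k` vertices has fewer than `2k` of them, so `D` can be taken to contain about half of
`S`. By induction, the number `m` of micro trees satisfies `m * x ≤ max (4 |S| - x) x`.
-/

open Finset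

namespace SimpleGraph

variable {V : Type*} {G : SimpleGraph V}

def ReachIn (G : SimpleGraph V) (S : Finset V) : V → V → Prop :=
  Relation.ReflTransGen fun u v => G.Adj u v ∧ u ∈ S ∧ v ∈ S

def ConnectedOn (G : SimpleGraph V) (S : Finset V) : Prop :=
  S.Nonempty ∧ ∀ a ∈ S, ∀ b ∈ S, G.ReachIn S a b

section ReachIn

variable {S T : Finset V} {a b : V}

@[refl]
theorem ReachIn.refl : G.ReachIn S a a := Relation.ReflTransGen.refl

theorem ReachIn.symm (h : G.ReachIn S a b) : G.ReachIn S b a := by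
  induction h with
  | refl => rfl
  | tail _ hbc ih => exact .head ⟨hbc.1.symm, hbc.2.2, hbc.2.1⟩ ih

theorem ReachIn.mono (hST : S ⊆ T) (h : G.ReachIn S a b) : G.ReachIn T a b :=
  Relation.ReflTransGen.mono (fun _ _ h => ⟨h.1, hST h.2.1, hST h.2.2⟩) _ _ h

theorem ReachIn.mem_of_mem (h : G.ReachIn S a b) (hb : b ∈ S) : a ∈ S := by
  induction h using Relation.ReflTransGen.head_induction_on with
  | refl => exact hb
  | head hac _ _ => exact hac.2.1

theorem ReachIn.exists_adj_of_mem_of_notMem [DecidableEq V] {D : Finset V}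
    (h : G.ReachIn S a b) (ha : a ∈ D) (hb : b ∉ D) : ∃ p ∈ D, ∃ q ∈ S \ D, G.Adj p q := by
  induction h using Relation.ReflTransGen.head_induction_on with
  | refl => exact absurd ha hb
  | @head a c hac _ ih =>
    by_cases hc : c ∈ D
    · exact ih hc
    · exact ⟨a, ha, c, mem_sdiff.2 ⟨hac.2.2, hc⟩, hac.1⟩

theorem ReachIn.reachable {H : SimpleGraph V} (hH : ∀ u ∈ S, ∀ v ∈ S, G.Adj u v → H.Adj u v)
    (h : G.ReachIn S a b) : H.Reachable a b := by
  induction h with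
  | refl => rfl
  | tail _ hbc ih => exact ih.trans (hH _ hbc.2.1 _ hbc.2.2 hbc.1).reachable

end ReachIn

section ConnectedOn

variable {A B S : Finset V} {a b : V}

theorem connectedOn_singleton (v : V) : G.ConnectedOn {v} := by
  refine ⟨singleton_nonempty v, ?_⟩
  simp only [mem_singleton]
  rintro a rfl b rfl
  rfl

theorem Connected.connectedOn_univ [Fintype V] (h : G.Connected) : G.ConnectedOn univ := by
  refine ⟨univ_nonempty_iff.2 h.nonempty, fun a _ b _ => ?_⟩
  obtain ⟨p⟩ := h.preconnected a b
  induction p with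
  | nil => rfl
  | cons hadj _ ih => exact .head ⟨hadj, mem_univ _, mem_univ _⟩ (ih (mem_univ _) (mem_univ _))

theorem ConnectedOn.induce_connected (h : G.ConnectedOn S) :
    (G.induce (S : Set V)).Connected := by
  have hreach : ∀ {a b} (hab : G.ReachIn S a b) (ha : a ∈ S) (hb : b ∈ S),
      (G.induce (S : Set V)).Reachable ⟨a, ha⟩ ⟨b, hb⟩ := by
    intro a b hab
    induction hab with
    | refl => exact fun _ _ => Reachable.refl _
    | tail _ hbc ih => exact fun ha hc => (ih ha hbc.2.1).trans (Adj.reachable hbc.1)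
  obtain ⟨v, hv⟩ := h.1
  rw [connected_iff]
  exact ⟨fun ⟨a, ha⟩ ⟨b, hb⟩ => hreach (h.2 a ha b hb) ha hb, ⟨⟨v, hv⟩⟩⟩

theorem ConnectedOn.union_of_adj [DecidableEq V] (hA : G.ConnectedOn A) (hB : G.ConnectedOn B)
    (ha : a ∈ A) (hb : b ∈ B) (hab : G.Adj a b) : G.ConnectedOn (A ∪ B) := by
  have reach_a : ∀ v ∈ A ∪ B, G.ReachIn (A ∪ B) a v := by
    intro v hv
    rcases mem_union.1 hv with hv | hv
    · exact (hA.2 a ha v hv).mono subset_union_left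
    · exact .head ⟨hab, mem_union_left _ ha, mem_union_right _ hb⟩
        ((hB.2 b hb v hv).mono subset_union_right)
  exact ⟨hA.1.mono subset_union_left, fun u hu v hv => (reach_a u hu).symm.trans (reach_a v hv)⟩

end ConnectedOn

section Components

variable {S X : Finset V} {a b u v w : V}

open Classical in
noncomputable def componentIn (G : SimpleGraph V) (S : Finset V) (v : V) : Finset V :=
  S.filter (G.ReachIn S v)

theorem mem_componentIn : u ∈ G.componentIn S v ↔ u ∈ S ∧ G.ReachIn S v u := by
  classical
  exact mem_filter

theorem componentIn_subset : G.componentIn S v ⊆ S := fun _ hu => (mem_componentIn.1 hu).1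

theorem mem_componentIn_self (hv : v ∈ S) : v ∈ G.componentIn S v :=
  mem_componentIn.2 ⟨hv, .refl⟩

theorem mem_componentIn_of_adj (ha : a ∈ G.componentIn S v) (hb : b ∈ S) (hab : G.Adj a b) :
    b ∈ G.componentIn S v := by
  rw [mem_componentIn] at ha ⊢
  exact ⟨hb, ha.2.tail ⟨hab, ha.1, hb⟩⟩

theorem componentIn_eq_empty (hv : v ∉ S) : G.componentIn S v = ∅ :=
  eq_empty_of_forall_notMem fun _ hu =>
    hv ((mem_componentIn.1 hu).2.mem_of_mem (mem_componentIn.1 hu).1)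

theorem componentIn_eq_of_mem (hu : u ∈ G.componentIn S v) :
    G.componentIn S u = G.componentIn S v := by
  rw [mem_componentIn] at hu
  ext y
  simp only [mem_componentIn, and_congr_right_iff]
  exact fun _ => ⟨hu.2.trans, fun hvy => hu.2.symm.trans hvy⟩

theorem ReachIn.reachIn_componentIn (h : G.ReachIn S v u) :
    G.ReachIn (G.componentIn S v) v u := by
  induction h with
  | refl => rfl
  | @tail b c hvb hbc ih =>
    exact ih.tail ⟨hbc.1, mem_componentIn.2 ⟨hbc.2.1, hvb⟩,
      mem_componentIn.2 ⟨hbc.2.2, hvb.tail hbc⟩⟩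

theorem connectedOn_componentIn (hv : v ∈ S) : G.ConnectedOn (G.componentIn S v) := by
  refine ⟨⟨v, mem_componentIn_self hv⟩, fun a ha b hb => ?_⟩
  rw [mem_componentIn] at ha hb
  exact ha.2.reachIn_componentIn.symm.trans hb.2.reachIn_componentIn

variable [DecidableEq V]

theorem componentIn_subset_sdiff_componentIn (hu : u ∈ S) (hua : u ∉ G.componentIn S a) :
    G.componentIn S u ⊆ S \ G.componentIn S a := by
  intro y hy
  refine mem_sdiff.2 ⟨componentIn_subset hy, fun hya => hua ?_⟩
  rw [← componentIn_eq_of_mem hya, componentIn_eq_of_mem hy]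
  exact mem_componentIn_self hu

theorem ConnectedOn.exists_adj_of_mem_componentIn (hX : G.ConnectedOn X) (hw : w ∈ X)
    (hu : u ∈ X.erase w) : ∃ z ∈ G.componentIn (X.erase w) u, G.Adj z w := by
  have hwC : w ∉ G.componentIn (X.erase w) u :=
    fun h => (mem_erase.1 (componentIn_subset h)).1 rfl
  obtain ⟨z, hz, q, hq, hzq⟩ := (hX.2 u (mem_of_mem_erase hu) w hw).exists_adj_of_mem_of_notMem
    (mem_componentIn_self hu) hwC
  obtain ⟨hqX, hqC⟩ := mem_sdiff.1 hq
  by_cases hqw : q = w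
  · exact ⟨z, hz, hqw ▸ hzq⟩
  · exact absurd (mem_componentIn_of_adj hz (mem_erase.2 ⟨hqw, hqX⟩) hzq) hqC

theorem ConnectedOn.exists_adj_of_mem_erase_sdiff (hX : G.ConnectedOn X) (hw : w ∈ X)
    (hu : u ∈ X.erase w \ G.componentIn (X.erase w) a) :
    ∃ z ∈ X.erase w \ G.componentIn (X.erase w) a, G.Adj z w := by
  obtain ⟨hu, hua⟩ := mem_sdiff.1 hu
  obtain ⟨z, hz, hzw⟩ := hX.exists_adj_of_mem_componentIn hw hu
  exact ⟨z, componentIn_subset_sdiff_componentIn hu hua hz, hzw⟩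

theorem ConnectedOn.connectedOn_insert_componentIn (hX : G.ConnectedOn X) (hw : w ∈ X) :
    G.ConnectedOn (insert w (G.componentIn (X.erase w) a)) := by
  by_cases ha : a ∈ X.erase w
  · obtain ⟨z, hz, hzw⟩ := hX.exists_adj_of_mem_componentIn hw ha
    rw [insert_eq, union_comm]
    exact (connectedOn_componentIn ha).union_of_adj (connectedOn_singleton w) hz
      (mem_singleton_self w) hzw
  · rw [componentIn_eq_empty ha]
    exact connectedOn_singleton w

theorem ConnectedOn.connectedOn_sdiff_componentIn (hX : G.ConnectedOn X) (hw : w ∈ X) :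
    G.ConnectedOn (X \ G.componentIn (X.erase w) a) := by
  set C := G.componentIn (X.erase w) a
  have hwC : w ∈ X \ C := mem_sdiff.2 ⟨hw, fun h => (mem_erase.1 (componentIn_subset h)).1 rfl⟩
  suffices h : ∀ y ∈ X \ C, G.ReachIn (X \ C) y w from
    ⟨⟨w, hwC⟩, fun y hy y' hy' => (h y hy).trans (h y' hy').symm⟩
  intro y hy
  by_cases hyw : y = w
  · rw [hyw]
  obtain ⟨hyX, hya⟩ := mem_sdiff.1 hy
  have hy' : y ∈ X.erase w := mem_erase.2 ⟨hyw, hyX⟩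
  obtain ⟨z, hz, hzw⟩ := hX.exists_adj_of_mem_componentIn hw hy'
  have hsub : G.componentIn (X.erase w) y ⊆ X \ C :=
    (componentIn_subset_sdiff_componentIn hy' hya).trans
      (sdiff_subset_sdiff (erase_subset _ _) le_rfl)
  exact (((connectedOn_componentIn hy').2 y (mem_componentIn_self hy') z hz).mono hsub).tail
    ⟨hzw, hsub hz, hwC⟩

theorem ConnectedOn.connectedOn_erase_sdiff_componentIn (hX : G.ConnectedOn X) (hw : w ∈ X)
    (hadj : ∀ z ∈ X.erase w \ G.componentIn (X.erase w) a,
      ∀ z' ∈ X.erase w \ G.componentIn (X.erase w) a, G.Adj z w → G.Adj z' w → z = z')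
    (hne : (X.erase w \ G.componentIn (X.erase w) a).Nonempty) :
    G.ConnectedOn (X.erase w \ G.componentIn (X.erase w) a) := by
  set C := G.componentIn (X.erase w) a
  -- each vertex reaches, inside its own component, the only neighbour `z₀` of `w` outside `C`
  obtain ⟨z₀, hz₀, hz₀w⟩ := hX.exists_adj_of_mem_erase_sdiff hw hne.choose_spec
  suffices h : ∀ y ∈ X.erase w \ C, G.ReachIn (X.erase w \ C) y z₀ from
    ⟨hne, fun y hy y' hy' => (h y hy).trans (h y' hy').symm⟩
  intro y hy
  obtain ⟨hyX, hya⟩ := mem_sdiff.1 hy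
  obtain ⟨z, hz, hzw⟩ := hX.exists_adj_of_mem_componentIn hw hyX
  have hsub := componentIn_subset_sdiff_componentIn hyX hya
  obtain rfl : z = z₀ := hadj z (hsub hz) z₀ hz₀ hzw hz₀w
  exact ((connectedOn_componentIn hyX).2 y (mem_componentIn_self hyX) z hz).mono hsub

end Components

theorem IsAcyclic.eq_and_eq_of_adj [DecidableEq V] (hG : G.IsAcyclic) {A B : Finset V}
    {a a' b b' : V} (hA : G.ConnectedOn A) (hB : G.ConnectedOn B) (hAB : Disjoint A B)
    (ha : a ∈ A) (ha' : a' ∈ A) (hb : b ∈ B) (hb' : b' ∈ B) (hab : G.Adj a b)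
    (hab' : G.Adj a' b') : a = a' ∧ b = b' := by
  by_contra hne
  have hbA : b ∉ A := Finset.disjoint_right.1 hAB hb
  have haB : a ∉ B := Finset.disjoint_left.1 hAB ha
  -- otherwise `a ~ a' - b' ~ b` avoids the edge `ab`, which is a bridge
  have keep : ∀ u v, G.Adj u v → (u = a → v ≠ b) → (u = b → v ≠ a) →
      (G.deleteEdges {s(a, b)}).Adj u v := by
    intro u v huv h₁ h₂
    simp only [deleteEdges_adj, Set.mem_singleton_iff, Sym2.eq_iff, not_or, not_and]
    exact ⟨huv, h₁, h₂⟩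
  have hA' : ∀ u ∈ A, ∀ v ∈ A, G.Adj u v → (G.deleteEdges {s(a, b)}).Adj u v :=
    fun u hu v hv huv => keep u v huv (fun _ h => hbA (h ▸ hv)) (fun h => absurd (h ▸ hu) hbA)
  have hB' : ∀ u ∈ B, ∀ v ∈ B, G.Adj u v → (G.deleteEdges {s(a, b)}).Adj u v :=
    fun u hu v hv huv => keep u v huv (fun h => absurd (h ▸ hu) haB) (fun _ h => haB (h ▸ hv))
  have hcross : (G.deleteEdges {s(a, b)}).Adj a' b' :=
    keep a' b' hab' (fun h₁ h₂ => hne ⟨h₁.symm, h₂.symm⟩) (fun h => absurd (h ▸ ha') hbA)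
  exact isAcyclic_iff_forall_adj_isBridge.1 hG hab
    (((hA.2 a ha a' ha').reachable hA').trans
      (hcross.reachable.trans ((hB.2 b' hb' b hb).reachable hB')))

section Pendant

variable [DecidableEq V] {S X D B : Finset V} {r w d u : V}

/-- In a tree these are the parts of `S` cut off by a single edge, on the side away from `r`. -/
structure IsPendant (G : SimpleGraph V) (S : Finset V) (r : V) (D : Finset V) : Prop where
  subset : D ⊆ S
  root_notMem : r ∉ D
  connectedOn : G.ConnectedOn D
  connectedOn_sdiff : G.ConnectedOn (S \ D)

theorem IsPendant.ssubset (hD : G.IsPendant S r D) : D ⊂ S :=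
  hD.subset.ssubset_of_not_subset (sdiff_nonempty.1 hD.connectedOn_sdiff.1)

theorem IsPendant.exists_adj (hS : G.ConnectedOn S) (hD : G.IsPendant S r D) :
    ∃ d ∈ D, ∃ w ∈ S \ D, G.Adj d w := by
  obtain ⟨a, ha⟩ := hD.connectedOn.1
  obtain ⟨b, hb⟩ := hD.connectedOn_sdiff.1
  obtain ⟨hbS, hbD⟩ := mem_sdiff.1 hb
  exact (hS.2 a (hD.subset ha) b hbS).exists_adj_of_mem_of_notMem ha hbD

theorem IsPendant.eq_and_eq_of_adj (hG : G.IsAcyclic) (hD : G.IsPendant S r D) (hd : d ∈ D)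
    (hw : w ∈ S \ D) (hdw : G.Adj d w) {v u : V} (hv : v ∈ D) (hu : u ∈ S \ D)
    (hvu : G.Adj v u) : v = d ∧ u = w :=
  hG.eq_and_eq_of_adj hD.connectedOn hD.connectedOn_sdiff disjoint_sdiff hv hd hu hw hvu hdw

theorem IsPendant.lift (hB : G.IsPendant X w B) (hXS : X ⊆ S) (hSX : G.ConnectedOn (S \ X))
    {y z : V} (hy : y ∈ S \ X) (hz : z ∈ X \ B) (hyz : G.Adj y z) (hr : r ∉ B) :
    G.IsPendant S r B where
  subset := hB.subset.trans hXS
  root_notMem := hr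
  connectedOn := hB.connectedOn
  connectedOn_sdiff := by
    rw [← sdiff_union_sdiff_cancel hXS hB.subset]
    exact hSX.union_of_adj hB.connectedOn_sdiff hy hz hyz

theorem ConnectedOn.isPendant_componentIn (hX : G.ConnectedOn X) (hw : w ∈ X)
    (hu : u ∈ X.erase w) : G.IsPendant X w (G.componentIn (X.erase w) u) where
  subset := componentIn_subset.trans (erase_subset _ _)
  root_notMem h := (mem_erase.1 (componentIn_subset h)).1 rfl
  connectedOn := connectedOn_componentIn hu
  connectedOn_sdiff := hX.connectedOn_sdiff_componentIn hw

theorem ConnectedOn.isPendant_erase_sdiff_componentIn (hX : G.ConnectedOn X) (hw : w ∈ X)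
    (hadj : ∀ z ∈ X.erase w \ G.componentIn (X.erase w) u,
      ∀ z' ∈ X.erase w \ G.componentIn (X.erase w) u, G.Adj z w → G.Adj z' w → z = z')
    (hne : (X.erase w \ G.componentIn (X.erase w) u).Nonempty) :
    G.IsPendant X w (X.erase w \ G.componentIn (X.erase w) u) where
  subset := sdiff_subset.trans (erase_subset _ _)
  root_notMem h := (mem_erase.1 (mem_sdiff.1 h).1).1 rfl
  connectedOn := hX.connectedOn_erase_sdiff_componentIn hw hadj hne
  connectedOn_sdiff := by
    rw [Finset.sdiff_sdiff_eq_sdiff_union (componentIn_subset.trans (erase_subset _ _)),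
      sdiff_erase_self hw, ← insert_eq]
    exact hX.connectedOn_insert_componentIn hw

theorem IsPendant.card_componentIn_lt (hD : G.IsPendant S r D) (hr : r ∈ S) (hd : d ∈ D)
    (hw : w ∈ S \ D) (hdw : G.Adj d w) {t : ℕ} (ht : 1 ≤ t)
    (hmax : ∀ D', G.IsPendant S r D' → t ≤ #(S \ D') → #D' ≤ #D) :
    #(G.componentIn ((S \ D).erase w) r) < t := by
  by_cases hwr : w = r
  · rw [hwr, componentIn_eq_empty (notMem_erase r _), card_empty]
    omega
  set A := G.componentIn ((S \ D).erase w) r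
  have hrA : r ∈ (S \ D).erase w := mem_erase.2 ⟨Ne.symm hwr, mem_sdiff.2 ⟨hr, hD.root_notMem⟩⟩
  have hAR : A ⊆ (S \ D).erase w := componentIn_subset
  have hAS : A ⊆ S := hAR.trans ((erase_subset _ _).trans sdiff_subset)
  have hwA : w ∉ A := fun h => (mem_erase.1 (componentIn_subset h)).1 rfl
  -- otherwise `S \ A ⊋ D` would be a pendant set leaving at least `t` vertices
  by_contra! htA
  have hSA : S \ A = D ∪ ((S \ D) \ A) := by
    ext v
    have : v ∈ A → v ∈ S ∧ v ∉ D := fun h => mem_sdiff.1 (mem_of_mem_erase (hAR h))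
    have := @hD.subset v
    simp only [mem_sdiff, mem_union]
    tauto
  have hbig : G.IsPendant S r (S \ A) :=
    ⟨sdiff_subset, fun h => (mem_sdiff.1 h).2 (mem_componentIn_self hrA),
      hSA ▸ hD.connectedOn.union_of_adj
        (hD.connectedOn_sdiff.connectedOn_sdiff_componentIn hw) hd (mem_sdiff.2 ⟨hw, hwA⟩) hdw,
      (Finset.sdiff_sdiff_eq_self hAS).symm ▸ connectedOn_componentIn hrA⟩
  have := hmax _ hbig (by rwa [Finset.sdiff_sdiff_eq_self hAS])
  have := card_sdiff_add_card_eq_card hAS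
  have := card_le_card hAR
  have := card_erase_add_one hw
  have := card_sdiff_add_card_eq_card hD.subset
  omega

end Pendant

section Degree

variable [DecidableRel G.Adj] {S T X : Finset V} {u w : V}

theorem card_filter_adj_lt_of_adj (hST : S ⊆ T) (hu : u ∈ T) (huS : u ∉ S) (hwu : G.Adj w u) :
    #{v ∈ S | G.Adj w v} < #{v ∈ T | G.Adj w v} :=
  card_lt_card <| (ssubset_iff_of_subset (filter_subset_filter _ hST)).2
    ⟨u, mem_filter.2 ⟨hu, hwu⟩, fun h => huS (mem_filter.1 h).1⟩

theorem card_filter_adj_le_degree [Fintype V] : #{v ∈ S | G.Adj w v} ≤ G.degree w :=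
  card_le_card fun v hv => (mem_neighborFinset G w v).2 (mem_filter.1 hv).2

theorem eq_of_adj_of_card_filter_adj_le_one (h : #{v ∈ S | G.Adj w v} ≤ 1) :
    ∀ z ∈ S, ∀ z' ∈ S, G.Adj z w → G.Adj z' w → z = z' := fun z hz z' hz' hzw hz'w =>
  card_le_one.1 h z (mem_filter.2 ⟨hz, hzw.symm⟩) z' (mem_filter.2 ⟨hz', hz'w.symm⟩)

theorem ConnectedOn.card_filter_adj_erase_sdiff_componentIn_lt [DecidableEq V]
    (hX : G.ConnectedOn X) (hw : w ∈ X) (hu : u ∈ X.erase w) :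
    #{v ∈ X.erase w \ G.componentIn (X.erase w) u | G.Adj w v} < #{v ∈ X | G.Adj w v} := by
  obtain ⟨z, hz, hzw⟩ := hX.exists_adj_of_mem_componentIn hw hu
  exact card_filter_adj_lt_of_adj (sdiff_subset.trans (erase_subset _ _))
    (componentIn_subset.trans (erase_subset _ _) hz) (fun h => (mem_sdiff.1 h).2 hz) hzw.symm

end Degree

section MicroPartition

variable {x : ℕ} {S S₁ S₂ C : Finset V} {P P₁ P₂ : Finset (Finset V)}

def IsMicroTree (G : SimpleGraph V) (x : ℕ) (C : Finset V) : Prop :=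
  #C ≤ x ∧ G.ConnectedOn C ∧ ∃ a b, ∀ v ∈ C, ∀ u ∉ C, G.Adj v u → v = a ∨ v = b

theorem IsMicroTree.card_boundary_le_two [Fintype V] [DecidableEq V] [DecidableRel G.Adj]
    (h : G.IsMicroTree x C) : #{v ∈ C | ∃ u, u ∉ C ∧ G.Adj v u} ≤ 2 := by
  obtain ⟨a, b, hab⟩ := h.2.2
  refine (card_le_card (t := {a, b}) fun v hv => ?_).trans card_le_two
  obtain ⟨hv, u, hu, hvu⟩ := mem_filter.1 hv
  rcases hab v hv u hu hvu with rfl | rfl <;> simp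

variable [DecidableEq V]

structure IsMicroPartition (G : SimpleGraph V) (x : ℕ) (S : Finset V) (P : Finset (Finset V)) :
    Prop where
  isMicroTree : ∀ C ∈ P, G.IsMicroTree x C
  pairwiseDisjoint : (P : Set (Finset V)).PairwiseDisjoint id
  sup_eq : P.sup id = S

theorem IsMicroPartition.subset (h : G.IsMicroPartition x S P) (hC : C ∈ P) : C ⊆ S :=
  h.sup_eq ▸ le_sup (f := id) hC

theorem isMicroPartition_singleton (h : G.IsMicroTree x S) : G.IsMicroPartition x S {S} where
  isMicroTree := by simpa
  pairwiseDisjoint := by simp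
  sup_eq := by simp

theorem IsMicroPartition.union (h₁ : G.IsMicroPartition x S₁ P₁)
    (h₂ : G.IsMicroPartition x S₂ P₂) (h : Disjoint S₁ S₂) :
    G.IsMicroPartition x (S₁ ∪ S₂) (P₁ ∪ P₂) where
  isMicroTree C hC := (mem_union.1 hC).elim (h₁.isMicroTree C) (h₂.isMicroTree C)
  pairwiseDisjoint := by
    rw [coe_union]
    exact h₁.pairwiseDisjoint.union h₂.pairwiseDisjoint fun C hC C' hC' _ =>
      h.mono (h₁.subset hC) (h₂.subset hC')
  sup_eq := by rw [sup_union, h₁.sup_eq, h₂.sup_eq, sup_eq_union]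

end MicroPartition

section RootedCluster

variable [DecidableRel G.Adj] {S D : Finset V} {r u : V}

structure IsRootedCluster (G : SimpleGraph V) [DecidableRel G.Adj] (S : Finset V) (r : V) :
    Prop where
  connectedOn : G.ConnectedOn S
  root_mem : r ∈ S
  eq_root_of_adj : ∀ v ∈ S, ∀ u ∉ S, G.Adj v u → v = r
  card_filter_adj_root_le : #{u ∈ S | G.Adj r u} ≤ 2

theorem IsRootedCluster.isMicroTree {x : ℕ} {C : Finset V} {w : V} [DecidableEq V]
    (hS : G.IsRootedCluster S r) (hCS : C ⊆ S) (hC : G.ConnectedOn C) (hCx : #C ≤ x)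
    (hw : ∀ v ∈ C, ∀ u ∈ S \ C, G.Adj v u → v = w) : G.IsMicroTree x C := by
  refine ⟨hCx, hC, r, w, fun v hv u hu hvu => ?_⟩
  by_cases huS : u ∈ S
  · exact .inr (hw v hv u (mem_sdiff.2 ⟨huS, hu⟩) hvu)
  · exact .inl (hS.eq_root_of_adj v (hCS hv) u huS hvu)

variable [DecidableEq V]

theorem IsRootedCluster.isMicroTree_sdiff {x : ℕ} {d w : V} (hG : G.IsAcyclic)
    (hS : G.IsRootedCluster S r) (hD : G.IsPendant S r D) (hd : d ∈ D) (hw : w ∈ S \ D)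
    (hdw : G.Adj d w) (hx : #(S \ D) ≤ x) : G.IsMicroTree x (S \ D) :=
  hS.isMicroTree sdiff_subset hD.connectedOn_sdiff hx fun _ hv _ hu hvu =>
    (hD.eq_and_eq_of_adj hG hd hw hdw (Finset.sdiff_sdiff_eq_self hD.subset ▸ hu) hv hvu.symm).2

theorem ConnectedOn.exists_isPendant_split (hS : G.ConnectedOn S) (hr : r ∈ S)
    (hdeg : #{v ∈ S | G.Adj r v} ≤ 2) (hu : u ∈ S.erase r) :
    ∃ B₁ B₂, #B₁ + #B₂ + 1 = #S ∧ G.IsPendant S r B₁ ∧ (B₂ = ∅ ∨ G.IsPendant S r B₂) := by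
  set C := G.componentIn (S.erase r) u
  refine ⟨C, S.erase r \ C, ?_, hS.isPendant_componentIn hr hu, ?_⟩
  · rw [← card_union_of_disjoint disjoint_sdiff, union_sdiff_of_subset componentIn_subset,
      card_erase_add_one hr]
  rcases (S.erase r \ C).eq_empty_or_nonempty with h | h
  · exact .inl h
  · refine .inr (hS.isPendant_erase_sdiff_componentIn hr
      (eq_of_adj_of_card_filter_adj_le_one ?_) h)
    have := hS.card_filter_adj_erase_sdiff_componentIn_lt hr hu
    omega

theorem IsPendant.exists_isRootedCluster [Fintype V] (hG : G.IsAcyclic)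
    (hdeg : ∀ v, G.degree v ≤ 3) (hS : G.IsRootedCluster S r) (hD : G.IsPendant S r D) :
    ∃ d ∈ D, ∃ w ∈ S \ D, G.Adj d w ∧ G.IsRootedCluster D d := by
  obtain ⟨d, hd, w, hw, hdw⟩ := hD.exists_adj hS.connectedOn
  refine ⟨d, hd, w, hw, hdw, hD.connectedOn, hd, fun v hv u hu hvu => ?_, ?_⟩
  · by_cases huS : u ∈ S
    · exact (hD.eq_and_eq_of_adj hG hd hw hdw hv (mem_sdiff.2 ⟨huS, hu⟩) hvu).1
    · exact absurd (hS.eq_root_of_adj v (hD.subset hv) u huS hvu ▸ hv) hD.root_notMem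
  · have := card_filter_adj_lt_of_adj (subset_univ D) (mem_univ w) (mem_sdiff.1 hw).2 hdw
    have := (card_filter_adj_le_degree (S := univ)).trans (hdeg d)
    omega

theorem IsRootedCluster.exists_isPendant_two_mul_card_ge (hS : G.IsRootedCluster S r)
    (hS2 : 2 ≤ #S) : ∃ D, G.IsPendant S r D ∧ #S ≤ 2 * #D + 1 := by
  obtain ⟨u, hu⟩ : (S.erase r).Nonempty := by
    rw [← card_pos, card_erase_of_mem hS.root_mem]
    omega
  obtain ⟨B₁, B₂, hcard, hB₁, hB₂⟩ :=
    hS.connectedOn.exists_isPendant_split hS.root_mem hS.card_filter_adj_root_le hu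
  by_cases h : #B₂ ≤ #B₁
  · exact ⟨B₁, hB₁, by omega⟩
  · rcases hB₂ with rfl | hB₂
    · simp at h
    · exact ⟨B₂, hB₂, by omega⟩

theorem IsRootedCluster.exists_isPendant_card_le [Fintype V] (hG : G.IsAcyclic)
    (hdeg : ∀ v, G.degree v ≤ 3) (hS : G.IsRootedCluster S r) {k : ℕ} (hk : 1 ≤ k)
    (h : ∃ D, G.IsPendant S r D ∧ k ≤ #D) :
    ∃ D, G.IsPendant S r D ∧ k ≤ #D ∧ #D ≤ 2 * k - 1 := by
  classical
  obtain ⟨D, hDF, hmin⟩ := ({D ∈ S.powerset | G.IsPendant S r D ∧ k ≤ #D}).exists_min_image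
    card (h.imp fun D hD => mem_filter.2 ⟨mem_powerset.2 hD.1.subset, hD⟩)
  obtain ⟨hD, hkD⟩ := (mem_filter.1 hDF).2
  refine ⟨D, hD, hkD, ?_⟩
  obtain ⟨d, hd, w, hw, hdw, hDd⟩ := hD.exists_isRootedCluster hG hdeg hS
  rcases (D.erase d).eq_empty_or_nonempty with he | ⟨u, hu⟩
  · have := card_erase_add_one hd
    rw [he, card_empty] at this
    omega
  -- the at most two subtrees below `d` are pendant in `S`, so by minimality they are small
  have small : ∀ B, G.IsPendant D d B → #B < #D → #B < k := fun B hB hBD => by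
    by_contra hkB
    have hBS := hB.lift hD.subset hD.connectedOn_sdiff hw (mem_sdiff.2 ⟨hd, hB.root_notMem⟩)
      hdw.symm (fun h => hD.root_notMem (hB.subset h))
    exact absurd (hmin B (mem_filter.2 ⟨mem_powerset.2 hBS.subset, hBS, by omega⟩)) (by omega)
  obtain ⟨B₁, B₂, hcard, hB₁, hB₂⟩ :=
    hDd.connectedOn.exists_isPendant_split hd hDd.card_filter_adj_root_le hu
  have := small B₁ hB₁ (by omega)
  rcases hB₂ with rfl | hB₂
  · rw [card_empty] at hcard
    omega
  · have := small B₂ hB₂ (by omega)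
    omega

theorem IsRootedCluster.exists_isPendant_max [Fintype V] (hG : G.IsAcyclic)
    (hdeg : ∀ v, G.degree v ≤ 3) (hS : G.IsRootedCluster S r) {t : ℕ} (ht : 1 ≤ t)
    (htS : t < #S) :
    ∃ D, G.IsPendant S r D ∧ t ≤ #(S \ D) ∧ #S ≤ 2 * #D + t ∧
      ∀ D', G.IsPendant S r D' → t ≤ #(S \ D') → #D' ≤ #D := by
  classical
  obtain ⟨D₁, hD₁, hcard₁⟩ := hS.exists_isPendant_two_mul_card_ge (by omega)
  obtain ⟨D₀, hD₀, hk, hk'⟩ := hS.exists_isPendant_card_le hG hdeg (k := (#S - t + 1) / 2)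
    (by omega) ⟨D₁, hD₁, by omega⟩
  set F := {D ∈ S.powerset | G.IsPendant S r D ∧ t ≤ #(S \ D)}
  have mem_F : ∀ {D}, G.IsPendant S r D → t ≤ #(S \ D) → D ∈ F :=
    fun hD htD => mem_filter.2 ⟨mem_powerset.2 hD.subset, hD, htD⟩
  have htD₀ : t ≤ #(S \ D₀) := by
    have := card_sdiff_add_card_eq_card hD₀.subset
    omega
  obtain ⟨D, hDF, hmax⟩ := F.exists_max_image card ⟨D₀, mem_F hD₀ htD₀⟩
  obtain ⟨hD, htD⟩ := (mem_filter.1 hDF).2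
  have := hmax D₀ (mem_F hD₀ htD₀)
  exact ⟨D, hD, htD, by omega, fun D' hD' htD' => hmax D' (mem_F hD' htD')⟩

theorem IsRootedCluster.card_filter_adj_erase_sdiff_componentIn_le_one [Fintype V]
    (hdeg : ∀ v, G.degree v ≤ 3) (hS : G.IsRootedCluster S r) (hD : G.IsPendant S r D)
    {d w : V} (hd : d ∈ D) (hw : w ∈ S \ D) (hdw : G.Adj d w) :
    #{v ∈ (S \ D).erase w \ G.componentIn ((S \ D).erase w) r | G.Adj w v} ≤ 1 := by
  have hlt := card_filter_adj_lt_of_adj sdiff_subset (hD.subset hd)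
    (fun h => (mem_sdiff.1 h).2 hd) hdw.symm
  by_cases hwr : w = r
  · subst hwr
    rw [componentIn_eq_empty (notMem_erase w _), sdiff_empty]
    have : #{v ∈ (S \ D).erase w | G.Adj w v} ≤ #{v ∈ S \ D | G.Adj w v} :=
      card_le_card (filter_subset_filter _ (erase_subset w _))
    have := hS.card_filter_adj_root_le
    omega
  · have := hD.connectedOn_sdiff.card_filter_adj_erase_sdiff_componentIn_lt hw
      (mem_erase.2 ⟨Ne.symm hwr, mem_sdiff.2 ⟨hS.root_mem, hD.root_notMem⟩⟩)
    have := (card_filter_adj_le_degree (S := S)).trans (hdeg w)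
    omega

theorem IsRootedCluster.exists_isPendant_isMicroTree [Fintype V] (hG : G.IsAcyclic)
    (hdeg : ∀ v, G.degree v ≤ 3) (hS : G.IsRootedCluster S r) (hD : G.IsPendant S r D)
    {d w : V} (hd : d ∈ D) (hw : w ∈ S \ D) (hdw : G.Adj d w) {x t : ℕ} (ht : 1 ≤ t)
    (htx : t ≤ x) (htD : t ≤ #D + 1) (hxR : x < #(S \ D))
    (hmax : ∀ D', G.IsPendant S r D' → t ≤ #(S \ D') → #D' ≤ #D) :
    ∃ O, G.IsPendant S r O ∧ O ⊆ S \ D ∧ #O ≤ #D ∧ G.IsMicroTree x ((S \ D) \ O) := by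
  set A := G.componentIn ((S \ D).erase w) r
  set O := (S \ D).erase w \ A
  have hA : #A < t := hD.card_componentIn_lt hS.root_mem hd hw hdw ht hmax
  have hcardO : #O + #A + 1 = #(S \ D) := by
    rw [card_sdiff_add_card_eq_card componentIn_subset, card_erase_add_one hw]
  have hO_ne : O.Nonempty := card_pos.1 (by omega)
  have hOR : G.IsPendant (S \ D) w O := hD.connectedOn_sdiff.isPendant_erase_sdiff_componentIn hw
    (eq_of_adj_of_card_filter_adj_le_one
      (hS.card_filter_adj_erase_sdiff_componentIn_le_one hdeg hD hd hw hdw)) hO_ne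
  have hwO : w ∈ (S \ D) \ O := mem_sdiff.2 ⟨hw, hOR.root_notMem⟩
  have hO : G.IsPendant S r O := hOR.lift sdiff_subset
    ((Finset.sdiff_sdiff_eq_self hD.subset).symm ▸ hD.connectedOn)
    (mem_sdiff.2 ⟨hD.subset hd, fun h => (mem_sdiff.1 h).2 hd⟩) hwO hdw
    (fun h => (mem_sdiff.1 h).2 (mem_componentIn_self (mem_sdiff.1 h).1))
  obtain ⟨z, hz, hzw⟩ : ∃ z ∈ O, G.Adj z w :=
    hD.connectedOn_sdiff.exists_adj_of_mem_erase_sdiff hw hO_ne.choose_spec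
  have hwSO : w ∈ S \ O := mem_sdiff.2 ⟨(mem_sdiff.1 hw).1, hOR.root_notMem⟩
  have := card_sdiff_add_card_eq_card hO.subset
  have := card_sdiff_add_card_eq_card hD.subset
  have := card_sdiff_add_card_eq_card hOR.subset
  refine ⟨O, hO, hOR.subset, hmax O hO (by omega), hS.isMicroTree (w := w)
    (sdiff_subset.trans sdiff_subset) hOR.connectedOn_sdiff (by omega) fun v hv u hu hvu => ?_⟩
  obtain ⟨huS, huRO⟩ := mem_sdiff.1 hu
  by_cases huD : u ∈ D
  · exact (hD.eq_and_eq_of_adj hG hd hw hdw huD (sdiff_subset hv) hvu.symm).2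
  · have huO : u ∈ O := by
      by_contra huO
      exact huRO (mem_sdiff.2 ⟨mem_sdiff.2 ⟨huS, huD⟩, huO⟩)
    exact (hO.eq_and_eq_of_adj hG hz hwSO hzw huO
      (mem_sdiff.2 ⟨(mem_sdiff.1 (sdiff_subset hv)).1, (mem_sdiff.1 hv).2⟩) hvu.symm).2

theorem IsRootedCluster.exists_isMicroPartition [Fintype V] (hG : G.IsAcyclic)
    (hdeg : ∀ v, G.degree v ≤ 3) {x : ℕ} (hx : 1 ≤ x) (hS : G.IsRootedCluster S r) :
    ∃ P, G.IsMicroPartition x S P ∧ #P * x ≤ max (4 * #S - x) x := by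
  induction S using Finset.strongInduction generalizing r with
  | H S ih =>
  by_cases hSx : #S ≤ x
  · refine ⟨{S}, isMicroPartition_singleton ⟨hSx, hS.connectedOn, r, r, ?_⟩, by simp⟩
    exact fun v hv u hu hvu => .inl (hS.eq_root_of_adj v hv u hu hvu)
  obtain ⟨D, hD, htD, hSD, hmax⟩ := hS.exists_isPendant_max hG hdeg (t := (x + 3) / 4)
    (by omega) (by omega)
  obtain ⟨d, hd, w, hw, hdw, hDd⟩ := hD.exists_isRootedCluster hG hdeg hS
  have := card_sdiff_add_card_eq_card hD.subset
  obtain ⟨PD, hPD, hPDx⟩ := ih D hD.ssubset hDd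
  by_cases hR : #(S \ D) ≤ x
  · have hP := (isMicroPartition_singleton (hS.isMicroTree_sdiff hG hD hd hw hdw hR)).union hPD
      sdiff_disjoint
    rw [sdiff_union_of_subset hD.subset] at hP
    refine ⟨_, hP, ?_⟩
    have := Nat.mul_le_mul_right x ((card_union_le {S \ D} PD).trans_eq (by rw [card_singleton]))
    rw [add_mul, one_mul] at this
    rw [le_max_iff] at hPDx ⊢
    omega
  · obtain ⟨O, hO, hOR, hOD, hQ⟩ := hS.exists_isPendant_isMicroTree hG hdeg hD hd hw hdw
      (x := x) (t := (x + 3) / 4) (by omega) (by omega) (by omega) (by omega) hmax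
    obtain ⟨o, -, -, -, -, hOo⟩ := hO.exists_isRootedCluster hG hdeg hS
    obtain ⟨PO, hPO, hPOx⟩ := ih O hO.ssubset hOo
    have hP := (isMicroPartition_singleton hQ).union
      (hPD.union hPO (disjoint_of_subset_right hOR disjoint_sdiff))
      (disjoint_union_right.2 ⟨disjoint_of_subset_left sdiff_subset sdiff_disjoint, sdiff_disjoint⟩)
    rw [union_comm D, ← union_assoc, sdiff_union_of_subset hOR,
      sdiff_union_of_subset hD.subset] at hP
    refine ⟨_, hP, ?_⟩
    have := card_sdiff_add_card_eq_card hOR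
    have := Nat.mul_le_mul_right x ((card_union_le {(S \ D) \ O} (PD ∪ PO)).trans
      (add_le_add_right (card_union_le PD PO) _))
    rw [card_singleton, add_mul, add_mul, one_mul] at this
    have := hQ.2.1.1.card_pos
    rw [le_max_iff] at hPDx hPOx ⊢
    omega

end RootedCluster

theorem IsTree.exists_degree_le_two [Fintype V] [DecidableRel G.Adj] (h : G.IsTree) :
    ∃ r, G.degree r ≤ 2 := by
  rcases subsingleton_or_nontrivial V with hV | hV
  · obtain ⟨r⟩ := h.connected.nonempty
    have := G.degree_lt_card_verts r
    have := Fintype.card_le_one_iff_subsingleton.2 hV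
    exact ⟨r, by omega⟩
  · obtain ⟨r, hr⟩ := h.exists_vert_degree_one_of_nontrivial
    exact ⟨r, by omega⟩

end SimpleGraph

open SimpleGraph

/-- Micro-macro decomposition (Alstrup et al.): the vertices of a tree with
maximum degree at most 3 can be partitioned into `m` nonempty connected
pieces (micro trees), each of size at most `x`, with `m ≤ 4n/x + 1`
(stated as `m * x ≤ 4 * n + x`), such that each piece has at most two
boundary vertices (vertices adjacent to vertices outside the piece). -/
theorem micro_macro_decomposition {V : Type*} [Fintype V] [DecidableEq V]
    (G : SimpleGraph V) [DecidableRel G.Adj]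
    (hconn : G.Connected) (hacyc : G.IsAcyclic)
    (hdeg : ∀ v : V, G.degree v ≤ 3) (x : ℕ) (hx : 1 ≤ x) :
    ∃ (m : ℕ) (C : Fin m → Finset V),
      (∀ k, (C k).Nonempty) ∧
      (∀ k, (C k).card ≤ x) ∧
      (∀ k, (G.induce (↑(C k) : Set V)).Connected) ∧
      (∀ k l, k ≠ l → Disjoint (C k) (C l)) ∧
      (∀ v : V, ∃ k, v ∈ C k) ∧
      m * x ≤ 4 * Fintype.card V + x ∧
      (∀ k, ((C k).filter fun v => ∃ u : V, u ∉ C k ∧ G.Adj v u).card ≤ 2) := by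
  obtain ⟨r, hr⟩ := (⟨hconn, hacyc⟩ : G.IsTree).exists_degree_le_two
  have hroot : G.IsRootedCluster univ r :=
    ⟨hconn.connectedOn_univ, mem_univ r, fun _ _ u hu => absurd (mem_univ u) hu,
      card_filter_adj_le_degree.trans hr⟩
  obtain ⟨P, hP, hPx⟩ := hroot.exists_isMicroPartition hacyc hdeg hx
  set C : Fin #P → Finset V := fun k => P.equivFin.symm k
  have hC : ∀ k, G.IsMicroTree x (C k) := fun k => hP.isMicroTree _ (P.equivFin.symm k).2
  refine ⟨#P, C, fun k => (hC k).2.1.1, fun k => (hC k).1, fun k => (hC k).2.1.induce_connected,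
    fun k l hkl => hP.pairwiseDisjoint (P.equivFin.symm k).2 (P.equivFin.symm l).2
      fun h => hkl (P.equivFin.symm.injective (Subtype.ext h)),
    fun v => ?_, ?_, fun k => (hC k).card_boundary_le_two⟩
  · obtain ⟨c, hc, hvc⟩ := mem_sup.1 (hP.sup_eq ▸ mem_univ v)
    exact ⟨P.equivFin ⟨c, hc⟩, by simpa [C] using hvc⟩
  · rw [card_univ, le_max_iff] at hPx
    omega
end

section
/- Let T be a finite tree with vertices colored black or white, containing at least one connected subgraph of size i, for some 1 ≤ i ≤ n. Then the set {j : (i,j) appears in T} is exactly the integer interval [i_min, i_max], where i_min and i_max are the minimum and maximum number of black vertices over all connected subgraphs of T with exactly i vertices. -/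
/-!
In a tree, connected vertex sets of a fixed size are linked by single-vertex swaps. If `U₁ ≠ U₂`
are connected of the same size, add a neighbour `v` of `U₁` and delete a vertex `ℓ ≠ v` whose
removal keeps `U₁ ∪ {v}` connected, so that `∑ x ∈ U₁, dist(x, U₂)` strictly decreases: when
`U₁` meets `U₂`, take `v ∈ U₂` and `ℓ ∉ U₂` (subtrees are geodesically convex); otherwise `v` is a
step from `U₁` towards `U₂`. A swap changes the number of black vertices by at most one, so
swapping from a set with the minimum count towards one with the maximum count passes through
every intermediate count.
-/

open Finset

lemma Finset.sum_erase_insert_add {α M : Type*} [DecidableEq α] [AddCommMonoid M] (f : α → M)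
    {s : Finset α} {u v : α} (hu : u ∈ s) (hv : v ∉ s) :
    ∑ x ∈ (insert v s).erase u, f x + f u = ∑ x ∈ s, f x + f v := by
  rw [sum_erase_add _ _ (mem_insert_of_mem hu), sum_insert hv, add_comm]

namespace SimpleGraph

variable {V : Type*} {G : SimpleGraph V} {u v w x : V}

lemma exists_walk_support_subset_of_preconnected_induce {s : Set V}
    (hs : (G.induce s).Preconnected) (hu : u ∈ s) (hv : v ∈ s) :
    ∃ p : G.Walk u v, ∀ z ∈ p.support, z ∈ s := by
  obtain ⟨p⟩ := hs ⟨u, hu⟩ ⟨v, hv⟩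
  refine ⟨p.map (Embedding.induce s).toHom, fun z hz ↦ ?_⟩
  obtain ⟨y, -, rfl⟩ := List.mem_map.1 (Walk.support_map _ p ▸ hz)
  exact y.2

lemma connected_induce_of_forall_exists_walk {s : Set V} (hv : v ∈ s)
    (h : ∀ x ∈ s, ∃ p : G.Walk v x, ∀ z ∈ p.support, z ∈ s) : (G.induce s).Connected :=
  induce_connected_of_patches v hv fun hx ↦
    let ⟨p, hp⟩ := h _ hx
    ⟨{z | z ∈ p.support}, hp, p.start_mem_support, p.end_mem_support,
      p.connected_induce_support.preconnected _ _⟩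

lemma connected_induce_insert {s : Set V} (hs : (G.induce s).Connected) (hw : w ∈ s)
    (hadj : G.Adj w v) : (G.induce (insert v s)).Connected := by
  have := induce_union_connected hs.preconnected (induce_pair_connected_of_adj hadj).preconnected
    ⟨w, hw, by simp⟩
  rwa [Set.union_insert, Set.union_singleton, Set.insert_eq_of_mem (Set.mem_insert_of_mem _ hw)]
    at this

lemma exists_adj_mem_diff_of_preconnected_induce {s t : Set V} (ht : (G.induce t).Preconnected)
    (hu : u ∈ s ∩ t) (hv : v ∈ t \ s) : ∃ w ∈ s, ∃ y ∈ t \ s, G.Adj w y := by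
  obtain ⟨p, hp⟩ := exists_walk_support_subset_of_preconnected_induce ht hu.2 hv.1
  obtain ⟨d, hd, hd₁, hd₂⟩ := p.exists_boundary_dart s hu.1 hv.2
  exact ⟨d.fst, hd₁, d.snd, ⟨hp _ (p.dart_snd_mem_support_of_mem_darts hd), hd₂⟩, d.adj⟩

lemma IsAcyclic.length_eq_dist_of_isPath (hG : G.IsAcyclic) {p : G.Walk u v} (hp : p.IsPath) :
    p.length = G.dist u v := by
  obtain ⟨q, hq, hlen⟩ := p.reachable.exists_path_of_dist
  rw [← hlen, Subtype.mk.inj <| hG.subsingleton_path u v |>.elim ⟨p, hp⟩ ⟨q, hq⟩]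

lemma IsAcyclic.dist_add_dist_of_mem_support (hG : G.IsAcyclic) {p : G.Walk u v}
    (hp : p.IsPath) (hw : w ∈ p.support) : G.dist u w + G.dist w v = G.dist u v := by
  classical
  rw [← hG.length_eq_dist_of_isPath hp, ← hG.length_eq_dist_of_isPath (hp.takeUntil hw),
    ← hG.length_eq_dist_of_isPath (hp.dropUntil hw), ← Walk.length_append, p.take_spec hw]

lemma IsAcyclic.support_subset_of_isPath_s13 (hG : G.IsAcyclic) {s : Set V}
    (hs : (G.induce s).Preconnected) {p : G.Walk u v} (hp : p.IsPath) (hu : u ∈ s) (hv : v ∈ s) :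
    ∀ z ∈ p.support, z ∈ s := by
  classical
  obtain ⟨q, hq⟩ := exists_walk_support_subset_of_preconnected_induce hs hu hv
  rw [Subtype.mk.inj <| hG.subsingleton_path u v |>.elim ⟨p, hp⟩ ⟨q.bypass, q.bypass_isPath⟩]
  exact fun z hz ↦ hq z (q.support_bypass_subset_support hz)

lemma IsAcyclic.mem_of_dist_add_dist_eq (hG : G.IsAcyclic) (hconn : G.Connected) {s : Set V}
    (hs : (G.induce s).Preconnected) (hu : u ∈ s) (hv : v ∈ s)
    (h : G.dist u w + G.dist w v = G.dist u v) : w ∈ s := by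
  obtain ⟨p, hp⟩ := hconn.exists_walk_length_eq_dist u w
  obtain ⟨q, hq⟩ := hconn.exists_walk_length_eq_dist w v
  have hpath : (p.append q).IsPath :=
    (p.append q).isPath_of_length_eq_dist (by rw [Walk.length_append, hp, hq, h])
  exact hG.support_subset_of_isPath_s13 hs hpath hu hv w (by simp)

lemma IsAcyclic.exists_connected_induce_erase [DecidableEq V] (hG : G.IsAcyclic)
    (hconn : G.Connected) {S : Finset V} (hS : (G.induce (S : Set V)).Connected)
    (hv : v ∈ S) (hu : u ∈ S) (huv : u ≠ v) :
    ∃ ℓ ∈ S, ℓ ≠ v ∧ G.dist v u + G.dist u ℓ = G.dist v ℓ ∧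
      (G.induce (S.erase ℓ : Set V)).Connected := by
  -- `ℓ` is a vertex of `S` lying beyond `u` as seen from `v`, as far from `v` as possible.
  obtain ⟨ℓ, hℓ, hmax⟩ := (S.filter fun x ↦ G.dist v u + G.dist u x = G.dist v x).exists_max_image
    (G.dist v) ⟨u, by simp [hu]⟩
  rw [mem_filter] at hℓ
  have hℓv : ℓ ≠ v := by
    rintro rfl
    have := hconn.pos_dist_of_ne huv
    rw [dist_self, dist_comm] at hℓ
    omega
  refine ⟨ℓ, hℓ.1, hℓv, hℓ.2, connected_induce_of_forall_exists_walk (v := v)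
    (by simp [hv, hℓv.symm]) fun x hx ↦ ?_⟩
  obtain ⟨hxℓ, hxS⟩ := mem_erase.1 (mem_coe.1 hx)
  obtain ⟨q, hq⟩ := exists_walk_support_subset_of_preconnected_induce hS.preconnected hv hxS
  refine ⟨q.bypass, fun z hz ↦ ?_⟩
  refine mem_coe.2 (mem_erase.2 ⟨?_, hq z (q.support_bypass_subset_support hz)⟩)
  rintro rfl
  -- The path from `v` to `x` passes through `z = ℓ`, so `x` lies beyond `u` and farther than `ℓ`.
  have hvzx := hG.dist_add_dist_of_mem_support q.bypass_isPath hz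
  have := hconn.dist_triangle (u := v) (v := u) (w := x)
  have := hconn.dist_triangle (u := u) (v := z) (w := x)
  have := hmax x (mem_filter.2 ⟨hxS, by omega⟩)
  have := hconn.pos_dist_of_ne hxℓ.symm
  omega

/-- The distance from `x` to the nearest vertex of `s` (junk value `0` when `s` is empty). -/
noncomputable def infDist (G : SimpleGraph V) (x : V) (s : Set V) : ℕ :=
  sInf (G.dist x '' s)

lemma infDist_le_dist {s : Set V} (hw : w ∈ s) : G.infDist x s ≤ G.dist x w :=
  Nat.sInf_le ⟨w, hw, rfl⟩

lemma infDist_of_mem {s : Set V} (hx : x ∈ s) : G.infDist x s = 0 :=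
  Nat.eq_zero_of_le_zero (dist_self (G := G) (v := x) ▸ infDist_le_dist hx)

lemma exists_dist_eq_infDist {s : Set V} (hs : s.Nonempty) :
    ∃ w ∈ s, G.dist x w = G.infDist x s :=
  Nat.sInf_mem (hs.image _)

lemma Connected.infDist_eq_zero_iff (hconn : G.Connected) {s : Set V} (hs : s.Nonempty) :
    G.infDist x s = 0 ↔ x ∈ s := by
  refine ⟨fun h ↦ ?_, infDist_of_mem⟩
  obtain ⟨w, hw, hxw⟩ := exists_dist_eq_infDist (G := G) (x := x) hs
  rwa [hconn.dist_eq_zero_iff.1 (hxw.trans h)]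

lemma Connected.exists_adj_infDist_lt (hconn : G.Connected) {s : Set V} (hs : s.Nonempty)
    (hx : x ∉ s) : ∃ y, G.Adj x y ∧ G.infDist y s < G.infDist x s := by
  obtain ⟨w, hw, hxw⟩ := exists_dist_eq_infDist (G := G) (x := x) hs
  obtain ⟨p, hp⟩ := hconn.exists_walk_length_eq_dist x w
  have hnil : ¬ p.Nil := Walk.not_nil_of_ne fun h ↦ hx (h ▸ hw)
  refine ⟨p.snd, p.adj_snd hnil, ?_⟩
  have := infDist_le_dist (G := G) (x := p.snd) hw
  have := dist_le p.tail
  have := p.length_tail_add_one hnil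
  omega

lemma Connected.exists_adj_infDist_lt_of_disjoint (hconn : G.Connected) {U₁ U₂ : Finset V}
    (h₁ : U₁.Nonempty) (h₂ : U₂.Nonempty) (hdisj : Disjoint U₁ U₂) :
    ∃ w ∈ U₁, ∃ v ∉ U₁, G.Adj w v ∧ ∀ x ∈ U₁, G.infDist v U₂ < G.infDist x U₂ := by
  obtain ⟨w, hw, hmin⟩ := U₁.exists_min_image (G.infDist · U₂) h₁
  obtain ⟨v, hadj, hlt⟩ := hconn.exists_adj_infDist_lt (coe_nonempty.2 h₂)
    fun h ↦ Finset.disjoint_left.1 hdisj hw (mem_coe.1 h)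
  exact ⟨w, hw, v, fun hv ↦ (hmin v hv).not_gt hlt, hadj, fun x hx ↦ hlt.trans_le (hmin x hx)⟩

lemma IsAcyclic.exists_swap_infDist_lt [DecidableEq V] (hG : G.IsAcyclic) (hconn : G.Connected)
    {U₁ U₂ : Finset V} (h₁ : (G.induce (U₁ : Set V)).Connected)
    (h₂ : (G.induce (U₂ : Set V)).Connected) (hcard : #U₁ = #U₂) (hne : U₁ ≠ U₂) :
    ∃ u ∈ U₁, ∃ v ∉ U₁, (G.induce ((insert v U₁).erase u : Set V)).Connected ∧
      G.infDist v U₂ < G.infDist u U₂ := by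
  have hU₂ : (U₂ : Set V).Nonempty := let ⟨x⟩ := h₂.nonempty; ⟨x, x.2⟩
  obtain ⟨w, hw, v, hv, hadj, u₀, hu₀, hbeyond⟩ : ∃ w ∈ U₁, ∃ v ∉ U₁, G.Adj w v ∧
      ∃ u₀ ∈ U₁, ∀ ℓ ∈ U₁, G.dist v u₀ + G.dist u₀ ℓ = G.dist v ℓ →
        G.infDist v U₂ < G.infDist ℓ U₂ := by
    by_cases hdisj : Disjoint U₁ U₂
    · obtain ⟨w, hw, v, hv, hadj, hlt⟩ := hconn.exists_adj_infDist_lt_of_disjoint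
        (let ⟨x⟩ := h₁.nonempty; ⟨x, x.2⟩) (coe_nonempty.1 hU₂) hdisj
      exact ⟨w, hw, v, hv, hadj, w, hw, fun ℓ hℓ _ ↦ hlt ℓ hℓ⟩
    obtain ⟨a, ha⟩ := not_disjoint_iff_nonempty_inter.1 hdisj
    obtain ⟨c, hc₂, hc₁⟩ := not_subset.1 fun h ↦ hne (eq_of_subset_of_card_le h hcard.le).symm
    obtain ⟨u₀, hu₀₁, hu₀₂⟩ := not_subset.1 fun h ↦ hne (eq_of_subset_of_card_le h hcard.ge)
    obtain ⟨w, hw, v, ⟨hv₂, hv₁⟩, hadj⟩ := exists_adj_mem_diff_of_preconnected_induce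
      h₂.preconnected (s := U₁) (by simpa using mem_inter.1 ha) (by simpa using ⟨hc₂, hc₁⟩)
    refine ⟨w, hw, v, hv₁, hadj, u₀, hu₀₁, fun ℓ hℓ hvuℓ ↦ ?_⟩
    -- `U₂` is convex in the tree, so `ℓ ∈ U₂` would force `u₀ ∈ U₂`.
    rw [infDist_of_mem hv₂, pos_iff_ne_zero, Ne, hconn.infDist_eq_zero_iff hU₂]
    exact fun hℓ₂ ↦ hu₀₂ (hG.mem_of_dist_add_dist_eq hconn h₂.preconnected hv₂ hℓ₂ hvuℓ)
  have hS : (G.induce (insert v U₁ : Finset V)).Connected := by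
    rw [coe_insert]
    exact connected_induce_insert h₁ (mem_coe.2 hw) hadj
  obtain ⟨ℓ, hℓS, hℓv, hvuℓ, hS'⟩ := hG.exists_connected_induce_erase hconn hS
    (mem_insert_self v U₁) (mem_insert_of_mem hu₀) fun h ↦ hv (h ▸ hu₀)
  have hℓ : ℓ ∈ U₁ := (mem_insert.1 hℓS).resolve_left hℓv
  exact ⟨ℓ, hℓ, v, hv, hS', hbeyond ℓ hℓ hvuℓ⟩

theorem IsAcyclic.exists_connected_card_filter_eq (hG : G.IsAcyclic) (hconn : G.Connected)
    (p : V → Prop) [DecidablePred p] {U₁ U₂ : Finset V} (h₁ : (G.induce (U₁ : Set V)).Connected)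
    (h₂ : (G.induce (U₂ : Set V)).Connected) (hcard : #U₁ = #U₂) {j : ℕ}
    (hj₁ : #(U₁.filter p) ≤ j) (hj₂ : j ≤ #(U₂.filter p)) :
    ∃ U : Finset V, #U = #U₂ ∧ (G.induce (U : Set V)).Connected ∧ #(U.filter p) = j := by
  classical
  induction hΦ : ∑ x ∈ U₁, G.infDist x U₂ using Nat.strong_induction_on generalizing U₁ with
  | _ n ih =>
  obtain hj | hj := hj₁.eq_or_lt
  · exact ⟨U₁, hcard, h₁, hj⟩
  have hne : U₁ ≠ U₂ := by rintro rfl; omega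
  obtain ⟨u, hu, v, hv, h₁', hlt⟩ := hG.exists_swap_infDist_lt hconn h₁ h₂ hcard hne
  have hΦ' := sum_erase_insert_add (G.infDist · U₂) hu hv
  have hcount : #(((insert v U₁).erase u).filter p) + (if p u then 1 else 0) =
      #(U₁.filter p) + (if p v then 1 else 0) := by
    simpa only [card_filter] using sum_erase_insert_add (fun x ↦ if p x then 1 else 0) hu hv
  refine ih _ (by omega) h₁' ?_ ?_ rfl
  · rw [card_erase_of_mem (mem_insert_of_mem hu), card_insert_of_notMem hv]
    omega
  · split_ifs at hcount <;> omega

end SimpleGraph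

theorem appears_set_eq_Icc_general {V : Type*}
    (G : SimpleGraph V) (hconn : G.Connected) (hacyc : G.IsAcyclic)
    (col : V → Bool) (i : ℕ)
    (hex : ∃ U : Finset V, U.card = i ∧ (G.induce (↑U : Set V)).Connected)
    (J : Set ℕ)
    (hJ : J = {j : ℕ | ∃ U : Finset V, U.card = i ∧
      (G.induce (↑U : Set V)).Connected ∧ (U.filter fun v => col v).card = j}) :
    J = Set.Icc (sInf J) (sSup J) := by
  obtain ⟨U₀, hU₀, hU₀conn⟩ := hex
  have hJne : J.Nonempty := ⟨_, hJ.symm.subset ⟨U₀, hU₀, hU₀conn, rfl⟩⟩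
  have hJbdd : BddAbove J := ⟨i, fun j hj ↦ by
    obtain ⟨U, rfl, -, rfl⟩ := hJ.subset hj
    exact card_filter_le _ _⟩
  obtain ⟨Umin, hmin, hminconn, hminJ⟩ := hJ.subset (Nat.sInf_mem hJne)
  obtain ⟨Umax, hmax, hmaxconn, hmaxJ⟩ := hJ.subset (Nat.sSup_mem hJne hJbdd)
  refine Set.Subset.antisymm (fun j hj ↦ ⟨Nat.sInf_le hj, le_csSup hJbdd hj⟩) ?_
  rintro j ⟨hj₁, hj₂⟩
  obtain ⟨U, hU, hUconn, hUj⟩ := hacyc.exists_connected_card_filter_eq hconn _ hminconn hmaxconn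
    (hmin.trans hmax.symm) (hminJ ▸ hj₁) (hmaxJ ▸ hj₂)
  exact hJ.symm.subset ⟨U, hU.trans hmax, hUconn, hUj⟩

/-- Correctness of the min/max index: for a black/white colored tree and a
size `i` admitting at least one connected subgraph on `i` vertices, the set
of black-counts `j` such that `(i, j)` appears is exactly the integer
interval from the minimum to the maximum black-count over connected
subgraphs with `i` vertices. -/
theorem appears_set_eq_Icc {V : Type*} [Fintype V] [DecidableEq V]
    (G : SimpleGraph V) (hconn : G.Connected) (hacyc : G.IsAcyclic)
    (col : V → Bool) (i : ℕ) (hi1 : 1 ≤ i) (hin : i ≤ Fintype.card V)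
    (hex : ∃ U : Finset V, U.card = i ∧ (G.induce (↑U : Set V)).Connected)
    (J : Set ℕ)
    (hJ : J = {j : ℕ | ∃ U : Finset V, U.card = i ∧
      (G.induce (↑U : Set V)).Connected ∧ (U.filter fun v => col v).card = j}) :
    J = Set.Icc (sInf J) (sSup J) :=
  appears_set_eq_Icc_general G hconn hacyc col i hex J hJ
end
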